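/- arXiv:1809.10191 — 8 statements merged into one kernel-verified Lean document; each statement's English description precedes it below -/
import Mathlib

section
/- If π is an LS-path of degree r ≥ 1 over (S, ≤, b), then there exist LS-paths π_1, π_2, …, π_r of degree 1 such that max supp π_h ≤ min supp π_{h+1} for all h = 1, …, r−1 and π = π_1 + π_2 + ⋯ + π_r as functions on {0,…,N}. -/
/-!
Let `S j = π 0 + ⋯ + π (j - 1)`, so that `S` climbs monotonically from `S 0 = 0` to
`S (N + 1) = r`. Cutting the range `[0, r]` at the integers, i.e. composing `S` with the clamp
`x ↦ max h (min x (h + 1))` to `[h, h + 1]`, and taking increments gives a path `π_h` of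
degree one for every `h < r`, and these add up to `π`. The integrality conditions survive
because the clamp of `x` is one of `h`, `h + 1` or `x`; the supports are ordered because
`π_h` only moves while `S < h + 1` and `π_{h+1}` only while `S > h + 1`.
-/

open Finset MvPolynomial

/-- `Mf b i` is `M_i = lcm(b_{i-1}, b_i)`, with the convention `b_{-1} = 1`
(the convention `b_N = 1` is imposed as a hypothesis in the statements). -/
def Mf (b : ℕ → ℕ) (i : ℕ) : ℕ := Nat.lcm (if i = 0 then 1 else b (i - 1)) (b i)

/-- An LS-path of degree `r` over the totally ordered set `{0, …, N}` with bonds `b`: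
a function `π : {0,…,N} → ℚ` (modelled as `π : ℕ → ℚ` vanishing above `N`) with
nonnegative values, integrality `b_j·(π 0 + ⋯ + π j) ∈ ℤ` for all `0 ≤ j ≤ N-1`,
and total sum `π 0 + ⋯ + π N = r`. -/
def IsLSPath (N : ℕ) (b : ℕ → ℕ) (r : ℕ) (π : ℕ → ℚ) : Prop :=
  (∀ i, 0 ≤ π i) ∧ (∀ i, N < i → π i = 0) ∧
  (∀ j < N, ∃ k : ℤ, (b j : ℚ) * (∑ i ∈ Finset.range (j + 1), π i) = k) ∧
  (∑ i ∈ Finset.range (N + 1), π i = r)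

/-- `SuppLE π π'` says `max supp π ≤ min supp π'`:
every element of the support of `π` is `≤` every element of the support of `π'`. -/
def SuppLE (π π' : ℕ → ℚ) : Prop := ∀ i j, π i ≠ 0 → π' j ≠ 0 → i ≤ j

namespace LSPath

def unitClamp (h : ℕ) (x : ℚ) : ℚ := max (h : ℚ) (min x (h + 1))

section unitClamp

variable (h : ℕ) {x y : ℚ}

lemma unitClamp_mono (hxy : x ≤ y) : unitClamp h x ≤ unitClamp h y :=
  max_le_max le_rfl (min_le_min hxy le_rfl)

lemma unitClamp_sub_unitClamp_le (hxy : x ≤ y) : unitClamp h y - unitClamp h x ≤ y - x := by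
  simp only [unitClamp, min_def, max_def]
  split_ifs <;> linarith

lemma unitClamp_of_le (hx : x ≤ h) : unitClamp h x = h :=
  max_eq_left (min_le_of_left_le hx)

lemma unitClamp_of_ge (hx : (h : ℚ) + 1 ≤ x) : unitClamp h x = h + 1 := by
  rw [unitClamp, min_eq_right hx, max_eq_right (by linarith)]

lemma unitClamp_of_mem (h₁ : (h : ℚ) ≤ x) (h₂ : x ≤ h + 1) : unitClamp h x = x := by
  rw [unitClamp, min_eq_left h₂, max_eq_right h₁]

lemma unitClamp_cases (x : ℚ) :
    unitClamp h x = h ∨ unitClamp h x = h + 1 ∨ unitClamp h x = x := by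
  rcases le_total x h with hx | hx
  · exact .inl (unitClamp_of_le h hx)
  rcases le_total ((h : ℚ) + 1) x with hx' | hx'
  · exact .inr (.inl (unitClamp_of_ge h hx'))
  · exact .inr (.inr (unitClamp_of_mem h hx hx'))

lemma lt_of_unitClamp_ne (hxy : x ≤ y) (hne : unitClamp h x ≠ unitClamp h y) :
    x < h + 1 ∧ (h : ℚ) < y := by
  constructor
  · by_contra! hx
    exact hne (by rw [unitClamp_of_ge h hx, unitClamp_of_ge h (hx.trans hxy)])
  · by_contra! hy
    exact hne (by rw [unitClamp_of_le h (hxy.trans hy), unitClamp_of_le h hy])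

lemma sum_range_unitClamp_sub (r : ℕ) (hx₀ : 0 ≤ x) (hxr : x ≤ r) :
    ∑ h ∈ range r, (unitClamp h x - h) = x := by
  induction r with
  | zero => simp only [Nat.cast_zero] at hxr; simp [le_antisymm hxr hx₀]
  | succ n ih =>
    rw [sum_range_succ]
    rcases le_total x n with hx | hx
    · rw [ih hx, unitClamp_of_le n hx, sub_self, add_zero]
    · have hfull : ∀ h ∈ range n, unitClamp h x - h = 1 := fun h hh => by
        have : (h : ℚ) + 1 ≤ n := by exact_mod_cast mem_range.1 hh
        rw [unitClamp_of_ge h (this.trans hx)]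
        ring
      rw [sum_congr rfl hfull, unitClamp_of_mem n hx (by push_cast at hxr; linarith)]
      simp

end unitClamp

def partialSum (π : ℕ → ℚ) (j : ℕ) : ℚ := ∑ i ∈ range j, π i

def slice (π : ℕ → ℚ) (h i : ℕ) : ℚ :=
  unitClamp h (partialSum π (i + 1)) - unitClamp h (partialSum π i)

section slice

variable {π : ℕ → ℚ}

lemma partialSum_succ (π : ℕ → ℚ) (j : ℕ) : partialSum π (j + 1) = partialSum π j + π j :=
  sum_range_succ π j

lemma partialSum_mono (hπ : ∀ i, 0 ≤ π i) : Monotone (partialSum π) := fun _ _ hjk =>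
  sum_le_sum_of_subset_of_nonneg (range_subset_range.2 hjk) fun i _ _ => hπ i

lemma partialSum_nonneg (hπ : ∀ i, 0 ≤ π i) (j : ℕ) : 0 ≤ partialSum π j :=
  sum_nonneg fun i _ => hπ i

lemma partialSum_le_of_isLSPath {N : ℕ} {b : ℕ → ℕ} {r : ℕ} (hπ : IsLSPath N b r π) (j : ℕ) :
    partialSum π j ≤ r := by
  obtain ⟨hnn, hvan, -, hsum⟩ := hπ
  calc partialSum π j ≤ partialSum π (max j (N + 1)) := partialSum_mono hnn (le_max_left _ _)
    _ = partialSum π (N + 1) := by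
      refine (sum_subset (range_subset_range.2 (le_max_right _ _)) fun i _ hi => ?_).symm
      exact hvan i (by simpa using hi)
    _ = r := hsum

lemma slice_nonneg (hπ : ∀ i, 0 ≤ π i) (h i : ℕ) : 0 ≤ slice π h i :=
  sub_nonneg.2 (unitClamp_mono h (partialSum_mono hπ (Nat.le_succ i)))

lemma slice_le (hπ : ∀ i, 0 ≤ π i) (h i : ℕ) : slice π h i ≤ π i := by
  calc slice π h i ≤ partialSum π (i + 1) - partialSum π i :=
        unitClamp_sub_unitClamp_le h (partialSum_mono hπ (Nat.le_succ i))
    _ = π i := by rw [partialSum_succ, add_sub_cancel_left]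

lemma sum_range_slice (π : ℕ → ℚ) (h n : ℕ) :
    ∑ i ∈ range n, slice π h i = unitClamp h (partialSum π n) - h := by
  simp only [slice]
  rw [sum_range_sub (fun i => unitClamp h (partialSum π i)),
    show partialSum π 0 = 0 from sum_range_zero π, unitClamp_of_le h (Nat.cast_nonneg h)]

lemma isLSPath_slice {N : ℕ} {b : ℕ → ℕ} {r h : ℕ} (hπ : IsLSPath N b r π) (hr : h < r) :
    IsLSPath N b 1 (slice π h) := by
  obtain ⟨hnn, hvan, hint, hsum⟩ := hπ
  refine ⟨slice_nonneg hnn h, fun i hi => ?_, fun j hj => ?_, ?_⟩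
  · exact le_antisymm (hvan i hi ▸ slice_le hnn h i) (slice_nonneg hnn h i)
  · obtain ⟨k, hk⟩ := hint j hj
    rw [sum_range_slice]
    rcases unitClamp_cases h (partialSum π (j + 1)) with hc | hc | hc <;> rw [hc]
    · exact ⟨0, by simp⟩
    · exact ⟨b j, by push_cast; ring⟩
    · exact ⟨k - b j * h, by rw [partialSum, mul_sub, hk]; push_cast; ring⟩
  · have hS : partialSum π (N + 1) = r := hsum
    rw [sum_range_slice, hS, unitClamp_of_ge h (by exact_mod_cast hr)]
    ring

lemma suppLE_slice (hπ : ∀ i, 0 ≤ π i) (h : ℕ) : SuppLE (slice π h) (slice π (h + 1)) := by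
  intro i j hi hj
  by_contra! hji
  have hSi : partialSum π i < h + 1 :=
    (lt_of_unitClamp_ne h (partialSum_mono hπ (Nat.le_succ i)) (sub_ne_zero.1 hi).symm).1
  have hSj : ((h + 1 : ℕ) : ℚ) < partialSum π (j + 1) :=
    (lt_of_unitClamp_ne (h + 1) (partialSum_mono hπ (Nat.le_succ j)) (sub_ne_zero.1 hj).symm).2
  have hSji : partialSum π (j + 1) ≤ partialSum π i := partialSum_mono hπ hji
  push_cast at hSj
  linarith

lemma sum_range_slice_eq {N : ℕ} {b : ℕ → ℕ} {r : ℕ} (hπ : IsLSPath N b r π) (i : ℕ) :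
    ∑ h ∈ range r, slice π h i = π i := by
  have hclamp j := sum_range_unitClamp_sub (x := partialSum π j) r (partialSum_nonneg hπ.1 j)
    (partialSum_le_of_isLSPath hπ j)
  have hsub : ∀ h ∈ range r, slice π h i = (unitClamp h (partialSum π (i + 1)) - h)
      - (unitClamp h (partialSum π i) - h) := fun h _ => by rw [slice]; ring
  rw [sum_congr rfl hsub, sum_sub_distrib, hclamp, hclamp, partialSum_succ, add_sub_cancel_left]

end slice

end LSPath

theorem stmt2_general (N : ℕ) (b : ℕ → ℕ)
    (r : ℕ) (π : ℕ → ℚ) (hπ : IsLSPath N b r π) :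
    ∃ πs : ℕ → (ℕ → ℚ),
      (∀ h < r, IsLSPath N b 1 (πs h)) ∧
      (∀ h, h + 1 < r → SuppLE (πs h) (πs (h + 1))) ∧
      (∀ i, π i = ∑ h ∈ Finset.range r, πs h i) :=
  ⟨LSPath.slice π, fun _ hh => LSPath.isLSPath_slice hπ hh,
    fun h _ => LSPath.suppLE_slice hπ.1 h, fun i => (LSPath.sum_range_slice_eq hπ i).symm⟩

/-- If `π` is an LS-path of degree `r ≥ 1` over `(S, ≤, b)`, then there exist LS-paths
`π_1, …, π_r` of degree 1 with `max supp π_h ≤ min supp π_{h+1}` for `h = 1, …, r-1`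
and `π = π_1 + π_2 + ⋯ + π_r` as functions on `{0,…,N}`. -/
theorem stmt2 (N : ℕ) (hN : 1 ≤ N) (b : ℕ → ℕ) (hb : ∀ i < N, 0 < b i) (hbN : b N = 1)
    (r : ℕ) (hr : 1 ≤ r) (π : ℕ → ℚ) (hπ : IsLSPath N b r π) :
    ∃ πs : ℕ → (ℕ → ℚ),
      (∀ h < r, IsLSPath N b 1 (πs h)) ∧
      (∀ h, h + 1 < r → SuppLE (πs h) (πs (h + 1))) ∧
      (∀ i, π i = ∑ h ∈ Finset.range r, πs h i) :=
  stmt2_general N b r π hπ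
end

section
/- Let π be an LS-path of degree r ≥ 1 over (S, ≤, b). If π_1, …, π_r and π′_1, …, π′_r are two sequences of degree-1 LS-paths, each satisfying max supp π_h ≤ min supp π_{h+1} for all h = 1, …, r−1 (respectively for the π′_h), and π = π_1 + ⋯ + π_r = π′_1 + ⋯ + π′_r pointwise, then π_h = π′_h for every h. In other words, the standard decomposition (canonical form) of an LS-path into degree-1 LS-paths is unique. -/
open Finset MvPolynomial

/-!
Write `F_h(n) = π_h(0) + ⋯ + π_h(n-1)` for the partial sums of the pieces of a canonical
decomposition `π = π_0 + ⋯ + π_{r-1}`. Each `F_h(n)` lies in `[0, 1]`, and since the supports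
are ordered, `F_h(n) ≠ 0` forces the whole support of every earlier piece to lie below `n`,
so `F_g(n) = 1` for `g < h`. A sequence in `[0, 1]` with this staircase shape is determined
by its sum: `F_h(n) = min 1 (max 0 (P(n) - h))`, where `P(n) = F_0(n) + ⋯ + F_{r-1}(n)` is
the partial sum of `π`. Hence the partial sums, and so the pieces, depend only on `π`.
-/

lemma SuppLE.trans {f g k : ℕ → ℚ} (hfg : SuppLE f g) (hgk : SuppLE g k) (hg : ∃ j, g j ≠ 0) :
    SuppLE f k := by
  obtain ⟨j, hj⟩ := hg
  exact fun i l hi hl => (hfg i j hi hj).trans (hgk j l hj hl)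

lemma suppLE_of_lt {r : ℕ} {πs : ℕ → ℕ → ℚ} (hne : ∀ h < r, ∃ j, πs h j ≠ 0)
    (hchain : ∀ h, h + 1 < r → SuppLE (πs h) (πs (h + 1))) {g h : ℕ} (hgh : g < h)
    (hhr : h < r) : SuppLE (πs g) (πs h) := by
  induction h, hgh using Nat.le_induction with
  | base => exact hchain g hhr
  | succ h hgh ih =>
    exact (ih (by omega)).trans (hchain h hhr) (hne h (by omega))

lemma eq_clamp_of_staircase {r : ℕ} {v : ℕ → ℚ} (hv0 : ∀ g < r, 0 ≤ v g)
    (hv1 : ∀ g < r, v g ≤ 1) (hstair : ∀ g h, g < h → h < r → v h ≠ 0 → v g = 1)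
    {h : ℕ} (hhr : h < r) :
    v h = min 1 (max 0 (∑ g ∈ range r, v g - h)) := by
  have hsplit : ∑ g ∈ range r, v g = ∑ g ∈ range h, v g + v h + ∑ g ∈ Ico (h + 1) r, v g := by
    rw [← sum_range_succ, sum_range_add_sum_Ico _ hhr]
  have head_le : ∑ g ∈ range h, v g ≤ h := by
    simpa using sum_le_sum fun g hg => hv1 g ((mem_range.mp hg).trans hhr)
  have head_eq (hne : v h ≠ 0) : ∑ g ∈ range h, v g = h := by
    simpa using sum_congr rfl fun g hg => hstair g h (mem_range.mp hg) hhr hne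
  have tail_nonneg : 0 ≤ ∑ g ∈ Ico (h + 1) r, v g :=
    sum_nonneg fun g hg => hv0 g (mem_Ico.mp hg).2
  have tail_eq (hne : v h ≠ 1) : ∑ g ∈ Ico (h + 1) r, v g = 0 :=
    sum_eq_zero fun g hg => by
      by_contra hg0
      exact hne (hstair h g (mem_Ico.mp hg).1 (mem_Ico.mp hg).2 hg0)
  rw [hsplit]
  by_cases hzero : v h = 0
  · rw [tail_eq (by simp [hzero]), hzero]
    rw [max_eq_left (by linarith), min_eq_right zero_le_one]
  · rw [head_eq hzero]
    by_cases hone : v h = 1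
    · rw [hone, max_eq_right (by linarith), min_eq_left (by linarith)]
    · rw [tail_eq hone, add_zero, add_sub_cancel_left,
        max_eq_right (hv0 h hhr), min_eq_right (hv1 h hhr)]

section

variable {N : ℕ} {b : ℕ → ℕ} {r : ℕ} {π : ℕ → ℚ}

lemma IsLSPath.exists_ne_zero (hπ : IsLSPath N b r π) (hr : r ≠ 0) :
    ∃ j, π j ≠ 0 := by
  obtain ⟨j, -, hj⟩ := exists_ne_zero_of_sum_ne_zero (hπ.2.2.2 ▸ Nat.cast_ne_zero.mpr hr)
  exact ⟨j, hj⟩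

lemma IsLSPath.sum_range_of_lt (hπ : IsLSPath N b r π) {n : ℕ} (hn : N < n) :
    ∑ j ∈ range n, π j = r := by
  rw [← hπ.2.2.2]
  refine (sum_subset (range_subset_range.mpr hn) fun j _ hj => hπ.2.1 j ?_).symm
  simpa using hj

lemma IsLSPath.sum_range_le (hπ : IsLSPath N b r π) (n : ℕ) :
    ∑ j ∈ range n, π j ≤ r := by
  rw [← hπ.sum_range_of_lt (n := n + N + 1) (by omega)]
  exact sum_le_sum_of_subset_of_nonneg (range_subset_range.mpr (by omega))
    fun j _ _ => hπ.1 j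

lemma IsLSPath.sum_range_of_support_lt (hπ : IsLSPath N b r π) {n : ℕ}
    (hsupp : ∀ j, π j ≠ 0 → j < n) :
    ∑ j ∈ range n, π j = r := by
  rw [← hπ.sum_range_of_lt (n := n + N + 1) (by omega)]
  refine sum_subset (range_subset_range.mpr (by omega)) fun j _ hj => ?_
  by_contra hj0
  exact hj (mem_range.mpr (hsupp j hj0))

lemma sum_range_eq_clamp_of_canonical {πs : ℕ → ℕ → ℚ}
    (hdeg : ∀ h < r, IsLSPath N b 1 (πs h))
    (hchain : ∀ h, h + 1 < r → SuppLE (πs h) (πs (h + 1)))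
    (hsum : ∀ i, π i = ∑ h ∈ range r, πs h i) {h : ℕ} (hhr : h < r) (n : ℕ) :
    ∑ j ∈ range n, πs h j = min 1 (max 0 (∑ j ∈ range n, π j - h)) := by
  have hπ : ∑ j ∈ range n, π j = ∑ g ∈ range r, ∑ j ∈ range n, πs g j := by
    simp only [hsum]
    exact sum_comm
  rw [hπ]
  refine eq_clamp_of_staircase (v := fun g => ∑ j ∈ range n, πs g j)
    (fun g hg => sum_nonneg fun j _ => (hdeg g hg).1 j)
    (fun g hg => by exact_mod_cast (hdeg g hg).sum_range_le n) ?_ hhr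
  intro g g' hgg' hg'r hne
  obtain ⟨k, hk, hkne⟩ := exists_ne_zero_of_sum_ne_zero hne
  have hle := suppLE_of_lt (fun h hh => (hdeg h hh).exists_ne_zero one_ne_zero) hchain hgg' hg'r
  exact_mod_cast (hdeg g (hgg'.trans hg'r)).sum_range_of_support_lt
    fun j hj => (hle j k hj hkne).trans_lt (mem_range.mp hk)

end

lemma eq_of_sum_range_eq {f g : ℕ → ℚ} (hfg : ∀ n, ∑ j ∈ range n, f j = ∑ j ∈ range n, g j) :
    f = g := by
  funext n
  have := hfg (n + 1)
  rw [sum_range_succ, sum_range_succ, hfg n] at this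
  exact add_left_cancel this

theorem stmt3_general (N : ℕ) (b : ℕ → ℕ)
    (r : ℕ) (π : ℕ → ℚ)
    (πs πs' : ℕ → (ℕ → ℚ))
    (h1 : ∀ h < r, IsLSPath N b 1 (πs h)) (h1' : ∀ h < r, IsLSPath N b 1 (πs' h))
    (h2 : ∀ h, h + 1 < r → SuppLE (πs h) (πs (h + 1)))
    (h2' : ∀ h, h + 1 < r → SuppLE (πs' h) (πs' (h + 1)))
    (hsum : ∀ i, π i = ∑ h ∈ Finset.range r, πs h i)
    (hsum' : ∀ i, π i = ∑ h ∈ Finset.range r, πs' h i) :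
    ∀ h < r, πs h = πs' h := by
  intro h hh
  refine eq_of_sum_range_eq fun n => ?_
  rw [sum_range_eq_clamp_of_canonical h1 h2 hsum hh n,
    sum_range_eq_clamp_of_canonical h1' h2' hsum' hh n]

/-- Uniqueness of the standard decomposition (canonical form) of an LS-path of degree
`r ≥ 1` into degree-1 LS-paths: if `π = π_1 + ⋯ + π_r = π'_1 + ⋯ + π'_r` pointwise, with
both sequences consisting of degree-1 LS-paths satisfying
`max supp π_h ≤ min supp π_{h+1}`, then `π_h = π'_h` for every `h`. -/
theorem stmt3 (N : ℕ) (hN : 1 ≤ N) (b : ℕ → ℕ) (hb : ∀ i < N, 0 < b i) (hbN : b N = 1)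
    (r : ℕ) (hr : 1 ≤ r) (π : ℕ → ℚ) (hπ : IsLSPath N b r π)
    (πs πs' : ℕ → (ℕ → ℚ))
    (h1 : ∀ h < r, IsLSPath N b 1 (πs h)) (h1' : ∀ h < r, IsLSPath N b 1 (πs' h))
    (h2 : ∀ h, h + 1 < r → SuppLE (πs h) (πs (h + 1)))
    (h2' : ∀ h, h + 1 < r → SuppLE (πs' h) (πs' (h + 1)))
    (hsum : ∀ i, π i = ∑ h ∈ Finset.range r, πs h i)
    (hsum' : ∀ i, π i = ∑ h ∈ Finset.range r, πs' h i) :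
    ∀ h < r, πs h = πs' h :=
  stmt3_general N b r π πs πs' h1 h1' h2 h2' hsum hsum'
end

section
/- The set of LS-paths of degree 1 over (S, ≤, b) is finite, and the discrete LS algebra A is generated as a ℂ-algebra by the finitely many monomials x^π with π an LS-path of degree 1; in particular A is a finitely generated ℂ-algebra. -/
/-! In terms of its partial sums `S j = π 0 + ⋯ + π j`, an LS-path of degree `r` is a monotone
nonnegative sequence with `S j = r` for `j ≥ N` and `b j * S j ∈ ℤ` for `j < N`. Splitting
`S = min S 1 + max (S - 1) 0` writes an LS-path of degree `r + 1` as the sum of one of degree `1`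
and one of degree `r`. Since `M_i` is a common multiple of `b_{i-1}` and `b_i`, every exponent
`M_i * π i` is an integer, so `π ↦ x^π` turns sums into products; hence the monomials `x^π` form
the monoid generated by those of degree `1`. In degree `1`, each `S j` with `j < N` is one of the
finitely many fractions `k / b j ∈ [0, 1]`. -/

open Finset MvPolynomial

/-- The monomial `x^π = ∏_{i=0}^{N} x_i ^ (M_i · π i)` in `ℂ[x_0,…,x_N]`
(the exponents `M_i · π i` are nonnegative integers for an LS-path `π`). -/
noncomputable def xpow (N : ℕ) (b : ℕ → ℕ) (π : ℕ → ℚ) :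
    MvPolynomial (Fin (N + 1)) ℂ :=
  MvPolynomial.monomial
    (Finsupp.equivFunOnFinite.symm fun i : Fin (N + 1) => ⌊(Mf b i : ℚ) * π i⌋₊) (1 : ℂ)

/-- The discrete LS algebra over `(S, ≤, b)`: the `ℂ`-linear span in `ℂ[x_0,…,x_N]`
of the monomials `x^π`, with `π` ranging over all LS-paths of all degrees. -/
noncomputable def discreteLS (N : ℕ) (b : ℕ → ℕ) :
    Submodule ℂ (MvPolynomial (Fin (N + 1)) ℂ) :=
  Submodule.span ℂ {p | ∃ r π, IsLSPath N b r π ∧ p = xpow N b π}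

/-- The degree-`r` graded component `A_r = span_ℂ {x^π : π an LS-path of degree r}`. -/
noncomputable def discreteLSdeg (N : ℕ) (b : ℕ → ℕ) (r : ℕ) :
    Submodule ℂ (MvPolynomial (Fin (N + 1)) ℂ) :=
  Submodule.span ℂ {p | ∃ π, IsLSPath N b r π ∧ p = xpow N b π}

def partialSum (π : ℕ → ℚ) (j : ℕ) : ℚ := ∑ i ∈ range (j + 1), π i

def ofPartialSum (T : ℕ → ℚ) : ℕ → ℚ
  | 0 => T 0
  | i + 1 => T (i + 1) - T i

@[simp]
lemma partialSum_zero (π : ℕ → ℚ) : partialSum π 0 = π 0 := by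
  simp [partialSum]

lemma partialSum_succ (π : ℕ → ℚ) (j : ℕ) :
    partialSum π (j + 1) = partialSum π j + π (j + 1) :=
  sum_range_succ π (j + 1)

lemma partialSum_add (π π' : ℕ → ℚ) : partialSum (π + π') = partialSum π + partialSum π' := by
  ext j
  simp [partialSum, sum_add_distrib]

@[simp]
lemma partialSum_ofPartialSum (T : ℕ → ℚ) : partialSum (ofPartialSum T) = T := by
  ext j
  induction j with
  | zero => simp [ofPartialSum]
  | succ j ih => rw [partialSum_succ, ih, ofPartialSum]; ring

lemma ofPartialSum_partialSum (π : ℕ → ℚ) : ofPartialSum (partialSum π) = π := by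
  ext (_ | i)
  · simp [ofPartialSum]
  · simp [ofPartialSum, partialSum_succ]

lemma partialSum_injective : Function.Injective partialSum :=
  Function.LeftInverse.injective ofPartialSum_partialSum

lemma isLSPath_iff_partialSum {N : ℕ} {b : ℕ → ℕ} {r : ℕ} {π : ℕ → ℚ} :
    IsLSPath N b r π ↔
      0 ≤ partialSum π 0 ∧ Monotone (partialSum π) ∧ (∀ j, N ≤ j → partialSum π j = r) ∧
        ∀ j < N, ∃ k : ℤ, (b j : ℚ) * partialSum π j = k := by
  constructor
  · rintro ⟨hnonneg, hvanish, hint, hsum⟩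
    have hmono : Monotone (partialSum π) := monotone_nat_of_le_succ fun j => by
      rw [partialSum_succ]; linarith [hnonneg (j + 1)]
    refine ⟨by simpa using hnonneg 0, hmono, fun j hj => ?_, hint⟩
    induction j, hj using Nat.le_induction with
    | base => exact hsum
    | succ j hj ih => rw [partialSum_succ, ih, hvanish _ (by omega), add_zero]
  · rintro ⟨h0, hmono, htop, hint⟩
    refine ⟨?_, ?_, hint, htop N le_rfl⟩
    · rintro (_ | i)
      · simpa using h0
      · linarith [partialSum_succ π i, hmono (Nat.le_succ i)]
    · rintro (_ | i) hi
      · omega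
      · linarith [partialSum_succ π i, htop i (by omega), htop (i + 1) hi.le]

lemma exists_lcm_mul_sub_eq_int {a b : ℕ} {x y : ℚ} (hx : ∃ k : ℤ, (a : ℚ) * x = k)
    (hy : ∃ k : ℤ, (b : ℚ) * y = k) : ∃ k : ℤ, (Nat.lcm a b : ℚ) * (y - x) = k := by
  obtain ⟨k, hk⟩ := hx
  obtain ⟨k', hk'⟩ := hy
  obtain ⟨c, hc⟩ := Nat.dvd_lcm_left a b
  obtain ⟨d, hd⟩ := Nat.dvd_lcm_right a b
  have hc' : (Nat.lcm a b : ℚ) = a * c := by exact_mod_cast hc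
  have hd' : (Nat.lcm a b : ℚ) = b * d := by exact_mod_cast hd
  refine ⟨d * k' - c * k, ?_⟩
  push_cast
  linear_combination y * hd' - x * hc' + (d : ℚ) * hk' - (c : ℚ) * hk

lemma isLSPath_zero (N : ℕ) (b : ℕ → ℕ) : IsLSPath N b 0 0 :=
  ⟨fun _ => le_rfl, fun _ _ => rfl, fun _ _ => ⟨0, by simp⟩, by simp⟩

namespace IsLSPath

variable {N : ℕ} {b : ℕ → ℕ} {r r' : ℕ} {π π' : ℕ → ℚ}

lemma eq_zero_of_degree_zero (h : IsLSPath N b 0 π) : π = 0 := by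
  obtain ⟨h0, hmono, htop, -⟩ := isLSPath_iff_partialSum.mp h
  apply partialSum_injective
  ext j
  have hle : partialSum π j ≤ 0 := by
    simpa using (hmono (le_max_left j N)).trans_eq (htop _ (le_max_right j N))
  have hge : 0 ≤ partialSum π j := h0.trans (hmono (Nat.zero_le j))
  simp only [partialSum, Pi.zero_apply, sum_const_zero]
  exact le_antisymm hle hge

lemma add (h : IsLSPath N b r π) (h' : IsLSPath N b r' π') :
    IsLSPath N b (r + r') (π + π') := by
  obtain ⟨h0, hmono, htop, hint⟩ := isLSPath_iff_partialSum.mp h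
  obtain ⟨h0', hmono', htop', hint'⟩ := isLSPath_iff_partialSum.mp h'
  rw [isLSPath_iff_partialSum, partialSum_add]
  refine ⟨add_nonneg h0 h0', hmono.add hmono', fun j hj => ?_, fun j hj => ?_⟩
  · simp [htop j hj, htop' j hj]
  · obtain ⟨k, hk⟩ := hint j hj
    obtain ⟨k', hk'⟩ := hint' j hj
    exact ⟨k + k', by simp [mul_add, hk, hk']⟩

lemma exists_add_of_degree_succ (h : IsLSPath N b (r + 1) π) :
    ∃ σ τ, IsLSPath N b 1 σ ∧ IsLSPath N b r τ ∧ σ + τ = π := by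
  obtain ⟨h0, hmono, htop, hint⟩ := isLSPath_iff_partialSum.mp h
  set S := partialSum π
  refine ⟨ofPartialSum fun j => min (S j) 1, ofPartialSum fun j => max (S j - 1) 0, ?_, ?_, ?_⟩
  · rw [isLSPath_iff_partialSum, partialSum_ofPartialSum]
    refine ⟨le_min h0 zero_le_one, fun i j hij => min_le_min_right 1 (hmono hij),
      fun j hj => ?_, fun j hj => ?_⟩
    · simp [htop j hj]
    · obtain ⟨k, hk⟩ := hint j hj
      exact ⟨min k (b j), by simp [mul_min_of_nonneg, hk]⟩
  · rw [isLSPath_iff_partialSum, partialSum_ofPartialSum]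
    refine ⟨le_max_right _ _, fun i j hij => max_le_max_right 0 (by linarith [hmono hij]),
      fun j hj => ?_, fun j hj => ?_⟩
    · simp [htop j hj]
    · obtain ⟨k, hk⟩ := hint j hj
      exact ⟨max (k - b j) 0, by simp [mul_max_of_nonneg, mul_sub, hk]⟩
  · apply partialSum_injective
    ext j
    rw [partialSum_add, Pi.add_apply, partialSum_ofPartialSum, partialSum_ofPartialSum]
    rcases le_total (S j) 1 with hS | hS
    · rw [min_eq_left hS, max_eq_right (by linarith), add_zero]
    · rw [min_eq_right hS, max_eq_left (by linarith)]
      ring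

lemma exists_bond_mul_partialSum_eq (h : IsLSPath N b r π) {j : ℕ} (hj : j ≤ N) :
    ∃ k : ℤ, (b j : ℚ) * partialSum π j = k := by
  rcases hj.lt_or_eq with hj | rfl
  · exact h.2.2.1 j hj
  · exact ⟨b j * r, by simp [partialSum, h.2.2.2]⟩

lemma exists_mf_mul_eq (h : IsLSPath N b r π) (i : ℕ) : ∃ k : ℕ, (Mf b i : ℚ) * π i = k := by
  rcases lt_or_ge N i with hi | hi
  · exact ⟨0, by simp [h.2.1 i hi]⟩
  obtain ⟨k, hk⟩ : ∃ k : ℤ, (Mf b i : ℚ) * π i = k := by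
    rcases i with _ | i
    · simpa [Mf] using exists_lcm_mul_sub_eq_int (a := 1) (x := 0) ⟨0, by simp⟩
        (h.exists_bond_mul_partialSum_eq hi)
    · simpa [Mf, partialSum_succ] using exists_lcm_mul_sub_eq_int
        (h.exists_bond_mul_partialSum_eq (by omega : i ≤ N)) (h.exists_bond_mul_partialSum_eq hi)
  have hk0 : (0 : ℚ) ≤ k := hk ▸ mul_nonneg (Nat.cast_nonneg _) (h.1 i)
  lift k to ℕ using (by exact_mod_cast hk0)
  exact ⟨k, by simpa using hk⟩

end IsLSPath

lemma xpow_add {N : ℕ} {b : ℕ → ℕ} {σ τ : ℕ → ℚ}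
    (hσ : ∀ i, ∃ k : ℕ, (Mf b i : ℚ) * σ i = k) (hτ : ∀ i, ∃ k : ℕ, (Mf b i : ℚ) * τ i = k) :
    xpow N b (σ + τ) = xpow N b σ * xpow N b τ := by
  rw [xpow, xpow, xpow, monomial_mul, one_mul]
  congr 2
  ext i
  obtain ⟨k, hk⟩ := hσ i
  obtain ⟨k', hk'⟩ := hτ i
  simp only [Finsupp.coe_add, Pi.add_apply, Finsupp.coe_equivFunOnFinite_symm, mul_add, hk, hk']
  rw [← Nat.cast_add, Nat.floor_natCast, Nat.floor_natCast, Nat.floor_natCast]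

@[simp]
lemma xpow_zero (N : ℕ) (b : ℕ → ℕ) : xpow N b 0 = 1 := by
  rw [xpow, ← C_1, ← monomial_zero']
  congr 2
  ext i
  simp

lemma IsLSPath.xpow_add {N : ℕ} {b : ℕ → ℕ} {r r' : ℕ} {π π' : ℕ → ℚ}
    (h : IsLSPath N b r π) (h' : IsLSPath N b r' π') :
    xpow N b (π + π') = xpow N b π * xpow N b π' :=
  _root_.xpow_add h.exists_mf_mul_eq h'.exists_mf_mul_eq

def lsMonomials (N : ℕ) (b : ℕ → ℕ) : Submonoid (MvPolynomial (Fin (N + 1)) ℂ) where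
  carrier := {p | ∃ r π, IsLSPath N b r π ∧ p = xpow N b π}
  mul_mem' := by
    rintro _ _ ⟨r, π, hπ, rfl⟩ ⟨r', π', hπ', rfl⟩
    exact ⟨r + r', π + π', hπ.add hπ', (hπ.xpow_add hπ').symm⟩
  one_mem' := ⟨0, 0, isLSPath_zero N b, (xpow_zero N b).symm⟩

lemma closure_xpow_degree_one (N : ℕ) (b : ℕ → ℕ) :
    Submonoid.closure {p | ∃ π, IsLSPath N b 1 π ∧ p = xpow N b π} = lsMonomials N b := by
  refine le_antisymm (Submonoid.closure_le.mpr ?_) ?_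
  · rintro _ ⟨π, hπ, rfl⟩
    exact ⟨1, π, hπ, rfl⟩
  · rintro _ ⟨r, π, hπ, rfl⟩
    induction r generalizing π with
    | zero =>
      rw [hπ.eq_zero_of_degree_zero, xpow_zero]
      exact one_mem _
    | succ r ih =>
      obtain ⟨σ, τ, hσ, hτ, rfl⟩ := hπ.exists_add_of_degree_succ
      rw [hσ.xpow_add hτ]
      exact mul_mem (Submonoid.subset_closure ⟨σ, hσ, rfl⟩) (ih τ hτ)

lemma adjoin_xpow_degree_one (N : ℕ) (b : ℕ → ℕ) :
    Subalgebra.toSubmodule (Algebra.adjoin ℂ {p | ∃ π, IsLSPath N b 1 π ∧ p = xpow N b π}) =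
      discreteLS N b := by
  rw [Algebra.adjoin_eq_span, closure_xpow_degree_one]
  rfl

lemma finite_setOf_natCast_mul_eq_intCast {n : ℕ} (hn : 0 < n) :
    {q : ℚ | 0 ≤ q ∧ q ≤ 1 ∧ ∃ k : ℤ, (n : ℚ) * q = k}.Finite := by
  refine ((Set.finite_Icc (0 : ℤ) n).image fun k : ℤ => (k : ℚ) / n).subset ?_
  rintro q ⟨hq0, hq1, k, hk⟩
  have hn' : (0 : ℚ) < n := by exact_mod_cast hn
  have hk0 : (0 : ℚ) ≤ k := hk ▸ mul_nonneg hn'.le hq0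
  have hkn : (k : ℚ) ≤ n := hk ▸ mul_le_of_le_one_right hn'.le hq1
  refine ⟨k, ⟨by exact_mod_cast hk0, by exact_mod_cast hkn⟩, ?_⟩
  rw [div_eq_iff hn'.ne', ← hk, mul_comm]

lemma finite_setOf_isLSPath_one {N : ℕ} {b : ℕ → ℕ} (hb : ∀ i < N, 0 < b i) :
    {π | IsLSPath N b 1 π}.Finite := by
  have hfin := Set.Finite.pi' fun j : Fin N => finite_setOf_natCast_mul_eq_intCast (hb j j.2)
  refine Set.Finite.of_finite_image (f := fun π (j : Fin N) => partialSum π j)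
    (hfin.subset ?_) ?_
  · rintro _ ⟨π, hπ, rfl⟩ j
    obtain ⟨h0, hmono, htop, hint⟩ := isLSPath_iff_partialSum.mp hπ
    exact ⟨h0.trans (hmono (Nat.zero_le _)), (hmono j.2.le).trans_eq (by simpa using htop N le_rfl),
      hint j j.2⟩
  · intro π hπ π' hπ' heq
    apply partialSum_injective
    ext j
    rcases lt_or_ge j N with hj | hj
    · exact congrFun heq ⟨j, hj⟩
    · rw [(isLSPath_iff_partialSum.mp hπ).2.2.1 j hj, (isLSPath_iff_partialSum.mp hπ').2.2.1 j hj]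

theorem stmt5_general (N : ℕ) (b : ℕ → ℕ) (hb : ∀ i < N, 0 < b i) :
    {π : ℕ → ℚ | IsLSPath N b 1 π}.Finite ∧
    {p | ∃ π, IsLSPath N b 1 π ∧ p = xpow N b π}.Finite ∧
    Subalgebra.toSubmodule
      (Algebra.adjoin ℂ {p | ∃ π, IsLSPath N b 1 π ∧ p = xpow N b π}) = discreteLS N b ∧
    (∃ S : Subalgebra ℂ (MvPolynomial (Fin (N + 1)) ℂ),
      Subalgebra.toSubmodule S = discreteLS N b ∧ S.FG) := by
  have hpaths := finite_setOf_isLSPath_one hb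
  have hgens : {p | ∃ π, IsLSPath N b 1 π ∧ p = xpow N b π}.Finite :=
    (hpaths.image (xpow N b)).subset fun _ ⟨π, hπ, hp⟩ => ⟨π, hπ, hp.symm⟩
  exact ⟨hpaths, hgens, adjoin_xpow_degree_one N b,
    _, adjoin_xpow_degree_one N b, Subalgebra.fg_def.mpr ⟨_, hgens, rfl⟩⟩

/-- The set of LS-paths of degree 1 is finite, and the discrete LS algebra `A` is
generated as a `ℂ`-algebra by the finitely many monomials `x^π` with `π` of degree 1;
in particular `A` is a finitely generated `ℂ`-algebra. -/
theorem stmt5 (N : ℕ) (hN : 1 ≤ N) (b : ℕ → ℕ) (hb : ∀ i < N, 0 < b i) (hbN : b N = 1) :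
    {π : ℕ → ℚ | IsLSPath N b 1 π}.Finite ∧
    {p | ∃ π, IsLSPath N b 1 π ∧ p = xpow N b π}.Finite ∧
    Subalgebra.toSubmodule
      (Algebra.adjoin ℂ {p | ∃ π, IsLSPath N b 1 π ∧ p = xpow N b π}) = discreteLS N b ∧
    (∃ S : Subalgebra ℂ (MvPolynomial (Fin (N + 1)) ℂ),
      Subalgebra.toSubmodule S = discreteLS N b ∧ S.FG) :=
  stmt5_general N b hb
end

section
/- The discrete LS algebra A over a totally ordered set with bonds is a normal domain: A is an integral domain and is integrally closed in its field of fractions. -/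
open Finset MvPolynomial

/-! The exponent vectors of the monomials `x^π` form the submonoid `G ⊆ ℕ^{N+1}` cut out by the
congruences `b_j · ∑_{i ≤ j} a_i / M_i ∈ ℤ`, so `A` is the span of the monomials with exponents
in `G`. Since `G` is saturated (`a + c ∈ G` and `c ∈ G` force `a ∈ G`), `A` has cancellation:
if `p * g ∈ A` with `0 ≠ g ∈ A` and `q` is the part of `p` supported outside `G`, then `q * g ∈ A`,
and the leading exponent of `q * g` is that of `q` plus that of `g`, which is absurd unless
`q = 0`. So `A = ℂ[x] ∩ Frac A`, and `A` inherits integral closedness from the UFD `ℂ[x]`. -/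

namespace MvPolynomial

variable {σ R : Type*} [CommRing R]

theorem restrictSupport_sup_restrictSupport_compl (s : Set (σ →₀ ℕ)) :
    restrictSupport R s ⊔ restrictSupport R sᶜ = ⊤ := by
  rw [restrictSupport_eq_span, restrictSupport_eq_span, ← Submodule.span_union, ← Set.image_union,
    Set.union_compl_self, ← restrictSupport_eq_span, eq_top_iff]
  exact fun p _ => by simp

variable (R) in
noncomputable def restrictSupportSubalgebra (G : AddSubmonoid (σ →₀ ℕ)) :
    Subalgebra R (MvPolynomial σ R) :=
  (restrictSupport R (G : Set (σ →₀ ℕ))).toSubalgebra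
    (by simpa using (monomial_mem_restrictSupport R (m := 0) (r := (1 : R))).2 (Or.inl G.zero_mem))
    fun p q hp hq => restrictSupport_mono R (Set.add_subset_iff.2 fun _ ha _ hc => G.add_mem ha hc)
      (restrictSupport_add R (G : Set (σ →₀ ℕ)) G ▸ Submodule.mul_mem_mul hp hq)

theorem mem_restrictSupportSubalgebra_of_mul_mem [IsDomain R] [LinearOrder σ] [WellFoundedGT σ]
    {G : AddSubmonoid (σ →₀ ℕ)} (hG : ∀ a c, c ∈ G → a + c ∈ G → a ∈ G)
    {p g : MvPolynomial σ R} (hg : g ∈ restrictSupportSubalgebra R G) (hg0 : g ≠ 0)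
    (hpg : p * g ∈ restrictSupportSubalgebra R G) : p ∈ restrictSupportSubalgebra R G := by
  obtain ⟨p', hp', q, hq, rfl⟩ := Submodule.mem_sup.1
    ((restrictSupport_sup_restrictSupport_compl (R := R) (G : Set (σ →₀ ℕ))).symm ▸
      Submodule.mem_top (x := p))
  by_contra hp
  have hq0 : q ≠ 0 := fun h => hp (by rw [h, add_zero]; exact hp')
  have hqg : q * g ∈ restrictSupportSubalgebra R G := by
    simpa [add_mul] using sub_mem hpg (mul_mem (show p' ∈ restrictSupportSubalgebra R G from hp') hg)
  let m := MonomialOrder.lex (σ := σ)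
  have hdeg : m.degree q + m.degree g ∈ G :=
    m.degree_mul hq0 hg0 ▸ hqg (m.degree_mem_support (mul_ne_zero hq0 hg0))
  exact hq (m.degree_mem_support hq0) (hG _ _ (hg (m.degree_mem_support hg0)) hdeg)

end MvPolynomial

theorem Subalgebra.isIntegrallyClosed_of_mul_mem {R S : Type*} [CommRing R] [CommRing S]
    [IsDomain S] [IsIntegrallyClosed S] [Algebra R S] (T : Subalgebra R S)
    (hT : ∀ p g : S, g ∈ T → g ≠ 0 → p * g ∈ T → p ∈ T) : IsIntegrallyClosed T := by
  rw [isIntegrallyClosed_iff (FractionRing T)]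
  intro x hx
  let ι : FractionRing T →ₐ[T] FractionRing S := IsFractionRing.liftAlgHom (g := Algebra.ofId _ _)
    (FaithfulSMul.algebraMap_injective T (FractionRing S))
  obtain ⟨p, hp⟩ := IsIntegrallyClosed.isIntegral_iff.mp (IsIntegral.tower_top (A := S) (hx.map ι))
  obtain ⟨s, t, ht, rfl⟩ := IsFractionRing.div_surjective (A := T) x
  have ht0 : (t : S) ≠ 0 := fun h => nonZeroDivisors.ne_zero ht (Subtype.ext h)
  have hpt : p * t = s := by
    apply IsFractionRing.injective S (FractionRing S)
    have h := hp.trans (map_div₀ ι _ _)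
    rw [eq_div_iff (by simpa using ht0)] at h
    simpa [IsScalarTower.algebraMap_apply T S (FractionRing S)] using h
  have hpT : p ∈ T := hT p t t.2 ht0 (hpt ▸ s.2)
  refine ⟨⟨p, hpT⟩, ι.injective ?_⟩
  change ι _ = ι _
  rw [AlgHom.commutes, ← hp]
  rfl

theorem exists_intCast_mul_of_dvd {d m : ℕ} (h : d ∣ m) {x : ℚ} (hx : ∃ k : ℤ, (d : ℚ) * x = k) :
    ∃ k : ℤ, (m : ℚ) * x = k := by
  obtain ⟨e, rfl⟩ := h
  obtain ⟨k, hk⟩ := hx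
  exact ⟨e * k, by push_cast; rw [← hk]; ring⟩

section LSPath

variable {N : ℕ} {b : ℕ → ℕ}

theorem Mf_pos (hb : ∀ i < N, 0 < b i) (hbN : b N = 1) {i : ℕ} (hi : i ≤ N) : 0 < Mf b i := by
  have hb' : ∀ j ≤ N, 0 < b j := fun j hj => hj.lt_or_eq.elim (hb j) (· ▸ hbN ▸ one_pos)
  unfold Mf
  split_ifs
  · exact Nat.lcm_pos one_pos (hb' i hi)
  · exact Nat.lcm_pos (hb' _ (by omega)) (hb' i hi)

theorem IsLSPath.exists_intCast_partialSum {r : ℕ} {π : ℕ → ℚ} (hπ : IsLSPath N b r π)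
    (hbN : b N = 1) {j : ℕ} (hj : j ≤ N) :
    ∃ k : ℤ, (b j : ℚ) * ∑ i ∈ range (j + 1), π i = k := by
  rcases hj.lt_or_eq with hj | rfl
  · exact hπ.2.2.1 j hj
  · exact ⟨r, by rw [hbN, hπ.2.2.2]; simp⟩

theorem IsLSPath.exists_natCast_eq_mul {r : ℕ} {π : ℕ → ℚ} (hπ : IsLSPath N b r π)
    (hbN : b N = 1) {i : ℕ} (hi : i ≤ N) : ∃ k : ℕ, (Mf b i : ℚ) * π i = k := by
  obtain ⟨k₁, hk₁⟩ : ∃ k : ℤ, (Mf b i : ℚ) * ∑ l ∈ range (i + 1), π l = k :=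
    exists_intCast_mul_of_dvd (Nat.dvd_lcm_right _ _) (hπ.exists_intCast_partialSum hbN hi)
  obtain ⟨k₀, hk₀⟩ : ∃ k : ℤ, (Mf b i : ℚ) * ∑ l ∈ range i, π l = k := by
    cases i with
    | zero => exact ⟨0, by simp⟩
    | succ i =>
      exact exists_intCast_mul_of_dvd (by simp [Mf, Nat.dvd_lcm_left])
        (hπ.exists_intCast_partialSum hbN (by omega))
  have hk : (Mf b i : ℚ) * π i = (k₁ - k₀ : ℤ) := by
    rw [sum_range_succ, mul_add] at hk₁
    push_cast
    linarith
  have hk0 : 0 ≤ k₁ - k₀ := by exact_mod_cast hk ▸ mul_nonneg (Nat.cast_nonneg _) (hπ.1 i)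
  exact ⟨(k₁ - k₀).toNat, by rw [hk]; exact_mod_cast (Int.toNat_of_nonneg hk0).symm⟩

variable (N b) in
noncomputable def lsExponent (π : ℕ → ℚ) : Fin (N + 1) →₀ ℕ :=
  Finsupp.equivFunOnFinite.symm fun i => ⌊(Mf b i : ℚ) * π i⌋₊

theorem xpow_eq_monomial (π : ℕ → ℚ) : xpow N b π = monomial (lsExponent N b π) 1 := rfl

variable (N b) in
noncomputable def lsPathOf (a : Fin (N + 1) →₀ ℕ) : ℕ → ℚ :=
  fun i => if h : i < N + 1 then (a ⟨i, h⟩ : ℚ) / Mf b i else 0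

theorem lsPathOf_add (a c : Fin (N + 1) →₀ ℕ) :
    lsPathOf N b (a + c) = lsPathOf N b a + lsPathOf N b c := by
  funext i
  by_cases h : i < N + 1 <;> simp [lsPathOf, h, add_div]

variable (N b) in
/-- The exponent vectors of LS-paths: the integrality condition of `IsLSPath` extended to
`j = N`, where `b N = 1` turns it into integrality of the degree. -/
def lsExponents : AddSubmonoid (Fin (N + 1) →₀ ℕ) where
  carrier := {a | ∀ j ≤ N, ∃ k : ℤ, (b j : ℚ) * ∑ i ∈ range (j + 1), lsPathOf N b a i = k}
  add_mem' {a c} ha hc j hj := by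
    obtain ⟨k, hk⟩ := ha j hj
    obtain ⟨k', hk'⟩ := hc j hj
    exact ⟨k + k', by simp [lsPathOf_add, sum_add_distrib, mul_add, hk, hk']⟩
  zero_mem' j _ := ⟨0, by simp [lsPathOf]⟩

theorem lsExponents.mem_of_add_mem {a c : Fin (N + 1) →₀ ℕ} (hc : c ∈ lsExponents N b)
    (hac : a + c ∈ lsExponents N b) : a ∈ lsExponents N b := by
  intro j hj
  obtain ⟨k, hk⟩ := hac j hj
  obtain ⟨k', hk'⟩ := hc j hj
  exact ⟨k - k', by
    simp only [lsPathOf_add, Pi.add_apply, sum_add_distrib, mul_add] at hk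
    push_cast
    linarith⟩

theorem IsLSPath.lsPathOf_lsExponent (hb : ∀ i < N, 0 < b i) (hbN : b N = 1) {r : ℕ}
    {π : ℕ → ℚ} (hπ : IsLSPath N b r π) : lsPathOf N b (lsExponent N b π) = π := by
  funext i
  unfold lsPathOf
  split_ifs with hi
  · obtain ⟨k, hk⟩ := hπ.exists_natCast_eq_mul hbN (Nat.lt_succ_iff.1 hi)
    have hM : (Mf b i : ℚ) ≠ 0 := by exact_mod_cast (Mf_pos hb hbN (Nat.lt_succ_iff.1 hi)).ne'
    simp only [lsExponent, Finsupp.equivFunOnFinite_symm_apply_apply, hk, Nat.floor_natCast]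
    rw [← hk, mul_div_cancel_left₀ _ hM]
  · exact (hπ.2.1 i (by omega)).symm

theorem IsLSPath.lsExponent_mem (hb : ∀ i < N, 0 < b i) (hbN : b N = 1) {r : ℕ}
    {π : ℕ → ℚ} (hπ : IsLSPath N b r π) : lsExponent N b π ∈ lsExponents N b := by
  intro j hj
  rw [hπ.lsPathOf_lsExponent hb hbN]
  exact hπ.exists_intCast_partialSum hbN hj

theorem lsExponent_lsPathOf (hb : ∀ i < N, 0 < b i) (hbN : b N = 1) (a : Fin (N + 1) →₀ ℕ) :
    lsExponent N b (lsPathOf N b a) = a := by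
  ext i
  have hM : (Mf b i : ℚ) ≠ 0 := by exact_mod_cast (Mf_pos hb hbN (Nat.lt_succ_iff.1 i.2)).ne'
  simp [lsExponent, lsPathOf, i.is_le, mul_div_cancel₀ _ hM]

theorem isLSPath_lsPathOf (hbN : b N = 1) {a : Fin (N + 1) →₀ ℕ} (ha : a ∈ lsExponents N b) :
    ∃ r, IsLSPath N b r (lsPathOf N b a) := by
  have hnonneg : ∀ i, 0 ≤ lsPathOf N b a i := fun i => by
    unfold lsPathOf; split_ifs <;> positivity
  obtain ⟨k, hk⟩ := ha N le_rfl
  rw [hbN, Nat.cast_one, one_mul] at hk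
  have hk0 : 0 ≤ k := by exact_mod_cast hk ▸ sum_nonneg fun i _ => hnonneg i
  refine ⟨k.toNat, hnonneg, fun i hi => dif_neg (by omega), fun j hj => ha j hj.le, ?_⟩
  rw [hk]
  exact_mod_cast (Int.toNat_of_nonneg hk0).symm

theorem discreteLS_eq_restrictSupport (hb : ∀ i < N, 0 < b i) (hbN : b N = 1) :
    discreteLS N b = restrictSupport ℂ (lsExponents N b : Set (Fin (N + 1) →₀ ℕ)) := by
  rw [restrictSupport_eq_span, discreteLS]
  congr 1
  ext p
  constructor
  · rintro ⟨r, π, hπ, rfl⟩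
    exact ⟨_, hπ.lsExponent_mem hb hbN, rfl⟩
  · rintro ⟨a, ha, rfl⟩
    obtain ⟨r, hr⟩ := isLSPath_lsPathOf hbN ha
    exact ⟨r, _, hr, by rw [xpow_eq_monomial, lsExponent_lsPathOf hb hbN]⟩

end LSPath

theorem stmt7_general (N : ℕ) (b : ℕ → ℕ) (hb : ∀ i < N, 0 < b i) (hbN : b N = 1) :
    ∃ S : Subalgebra ℂ (MvPolynomial (Fin (N + 1)) ℂ),
      Subalgebra.toSubmodule S = discreteLS N b ∧ IsDomain ↥S ∧ IsIntegrallyClosed ↥S :=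
  ⟨restrictSupportSubalgebra ℂ (lsExponents N b), (discreteLS_eq_restrictSupport hb hbN).symm,
    inferInstance, Subalgebra.isIntegrallyClosed_of_mul_mem _ fun _ _ hg hg0 hpg =>
      mem_restrictSupportSubalgebra_of_mul_mem (fun _ _ => lsExponents.mem_of_add_mem) hg hg0 hpg⟩

/-- The discrete LS algebra over a totally ordered set with bonds is a normal domain:
it is a subalgebra of `ℂ[x_0,…,x_N]` which is an integral domain and is integrally
closed in its field of fractions. -/
theorem stmt7 (N : ℕ) (hN : 1 ≤ N) (b : ℕ → ℕ) (hb : ∀ i < N, 0 < b i) (hbN : b N = 1) :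
    ∃ S : Subalgebra ℂ (MvPolynomial (Fin (N + 1)) ℂ),
      Subalgebra.toSubmodule S = discreteLS N b ∧ IsDomain ↥S ∧ IsIntegrallyClosed ↥S :=
  stmt7_general N b hb hbN
end

section
/- A monomial ∏_{j=0}^{N} x_j^{n_j} (with n_j ∈ ℕ) is fixed by every element of G if and only if b_i·(n_0/M_0 + n_1/M_1 + ⋯ + n_i/M_i) ∈ ℤ for all 0 ≤ i ≤ N (with the convention b_N = 1). -/
/-!
Each generator `e_i` is diagonal, so it multiplies the monomial `x^n` by the scalar `ζ ^ E_i` with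
`E_i = ∑_{j ≤ i} (M / M_j) b_i n_j`. Since `ζ` has order `M`, `e_i` fixes `x^n` iff `M ∣ E_i`, i.e.
iff `E_i / M = b_i (n_0/M_0 + ⋯ + n_i/M_i)` is an integer; and the elements fixing `x^n` form a
subgroup, so it is enough to check the generators.
-/

open Finset MvPolynomial

/-- The diagonal matrix `e_i = diag(ζ^{(M/M_0)b_i}, …, ζ^{(M/M_i)b_i}, 1, …, 1)`
in `GL_{N+1}(ℂ)`, where `M = lcm(b_0, …, b_{N-1})`. -/
noncomputable def eMat (N : ℕ) (b : ℕ → ℕ) (ζ : ℂ) (i : ℕ) :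
    Matrix (Fin (N + 1)) (Fin (N + 1)) ℂ :=
  Matrix.diagonal fun j : Fin (N + 1) =>
    if (j : ℕ) ≤ i then ζ ^ ((Finset.range N).lcm b / Mf b (j : ℕ) * b i) else 1

/-- The subgroup `G` of `GL_{N+1}(ℂ)` generated by `e_0, e_1, …, e_N`. -/
noncomputable def Ggrp (N : ℕ) (b : ℕ → ℕ) (ζ : ℂ) :
    Subgroup (Matrix (Fin (N + 1)) (Fin (N + 1)) ℂ)ˣ :=
  Subgroup.closure
    {u | ∃ i ≤ N, (u : Matrix (Fin (N + 1)) (Fin (N + 1)) ℂ) = eMat N b ζ i}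

/-- The linear action of a matrix `g` on `ℂ[x_0,…,x_N]`: a diagonal matrix
`diag(d_0,…,d_N)` acts as the `ℂ`-algebra automorphism sending `x_j` to `d_j · x_j`. -/
noncomputable def matAct (N : ℕ) (g : Matrix (Fin (N + 1)) (Fin (N + 1)) ℂ) :
    MvPolynomial (Fin (N + 1)) ℂ →ₐ[ℂ] MvPolynomial (Fin (N + 1)) ℂ :=
  MvPolynomial.aeval fun j : Fin (N + 1) =>
    ∑ k : Fin (N + 1), MvPolynomial.C (g j k) * MvPolynomial.X k

section MatrixAction

variable {N : ℕ}

lemma matAct_one : matAct N 1 = AlgHom.id ℂ _ := by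
  refine MvPolynomial.algHom_ext fun j => ?_
  simp [matAct, Matrix.one_apply, apply_ite C]

lemma matAct_mul (A B : Matrix (Fin (N + 1)) (Fin (N + 1)) ℂ) :
    matAct N (A * B) = (matAct N B).comp (matAct N A) := by
  refine MvPolynomial.algHom_ext fun j => ?_
  simp only [AlgHom.comp_apply, matAct, aeval_X, map_sum, map_mul, aeval_C, Matrix.mul_apply,
    Finset.mul_sum, Finset.sum_mul, algebraMap_eq]
  rw [Finset.sum_comm]
  exact Finset.sum_congr rfl fun k _ => Finset.sum_congr rfl fun l _ => by ring

lemma matAct_diagonal_monomial (d : Fin (N + 1) → ℂ) (s : Fin (N + 1) →₀ ℕ) :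
    matAct N (Matrix.diagonal d) (monomial s 1) = monomial s (∏ j, d j ^ s j) := by
  have hX : ∀ j, ∑ k, C (Matrix.diagonal d j k) * X k = C (d j) * (X j : MvPolynomial _ ℂ) :=
    fun j => by simp [Matrix.diagonal_apply, apply_ite C]
  rw [matAct, aeval_monomial, map_one, one_mul, monomial_eq, C_mul',
    Finsupp.prod_fintype _ _ fun _ => pow_zero _, Finsupp.prod_fintype _ _ fun _ => pow_zero _]
  simp only [hX, mul_pow, Finset.prod_mul_distrib, ← map_pow, ← map_prod, smul_eq_C_mul]

def matActFixingSubgroup (p : MvPolynomial (Fin (N + 1)) ℂ) :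
    Subgroup (Matrix (Fin (N + 1)) (Fin (N + 1)) ℂ)ˣ where
  carrier := {u | matAct N u p = p}
  one_mem' := by simp [matAct_one]
  mul_mem' {u v} hu hv := by
    simp only [Set.mem_ofPred_eq, Units.val_mul, matAct_mul, AlgHom.comp_apply] at *
    rw [hu, hv]
  inv_mem' {u} hu := by
    simp only [Set.mem_ofPred_eq] at *
    conv_lhs => rw [← hu]
    rw [← AlgHom.comp_apply, ← matAct_mul, u.mul_inv, matAct_one, AlgHom.id_apply]

lemma forall_mem_closure_matAct_eq_iff (S : Set (Matrix (Fin (N + 1)) (Fin (N + 1)) ℂ)ˣ)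
    (p : MvPolynomial (Fin (N + 1)) ℂ) :
    (∀ u ∈ Subgroup.closure S, matAct N u p = p) ↔ ∀ u ∈ S, matAct N u p = p :=
  Subgroup.closure_le (matActFixingSubgroup p)

end MatrixAction

lemma dvd_iff_exists_int_eq_cast_div {m a : ℕ} (hm : m ≠ 0) :
    m ∣ a ↔ ∃ k : ℤ, (a : ℚ) / m = k := by
  constructor
  · rintro ⟨c, rfl⟩
    exact ⟨c, by push_cast; field_simp⟩
  · rintro ⟨k, hk⟩
    rw [div_eq_iff (by exact_mod_cast hm)] at hk
    exact Int.natCast_dvd_natCast.mp ⟨k, by rw [mul_comm]; exact_mod_cast hk⟩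

lemma cast_sum_div_mul_div {ι : Type*} (s : Finset ι) {M : ℕ} (c : ℕ) (d n : ι → ℕ)
    (hM : M ≠ 0) (hd : ∀ j ∈ s, d j ∣ M) :
    ((∑ j ∈ s, M / d j * c * n j : ℕ) : ℚ) / M = c * ∑ j ∈ s, (n j : ℚ) / d j := by
  rw [Nat.cast_sum, Finset.sum_div, Finset.mul_sum]
  refine Finset.sum_congr rfl fun j hj => ?_
  have hdj : (d j : ℚ) ≠ 0 := by exact_mod_cast ne_zero_of_dvd_ne_zero hM (hd j hj)
  rw [Nat.cast_mul, Nat.cast_mul, Nat.cast_div (hd j hj) hdj]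
  field_simp

section Bonds

variable {N : ℕ} {b : ℕ → ℕ}

lemma Mf_dvd_lcm_range {j : ℕ} (hj : j ≤ N) : Mf b j ∣ (range (N + 1)).lcm b := by
  refine Nat.lcm_dvd ?_ (dvd_lcm (mem_range.2 (by omega)))
  split_ifs
  · exact one_dvd _
  · exact dvd_lcm (mem_range.2 (by omega))

lemma lcm_range_succ_of_eq_one (hbN : b N = 1) : (range (N + 1)).lcm b = (range N).lcm b := by
  rw [range_add_one, lcm_insert, hbN, lcm_one_left, normalize_eq]

lemma lcm_range_ne_zero (hb : ∀ i < N, 0 < b i) : (range N).lcm b ≠ 0 := by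
  simpa [Finset.lcm_eq_zero_iff] using fun i hi => (hb i hi).ne'

lemma isUnit_eMat {ζ : ℂ} (hζ : ζ ≠ 0) (i : ℕ) : IsUnit (eMat N b ζ i) := by
  refine Matrix.isUnit_diagonal.mpr (Pi.isUnit_iff.mpr fun j => ?_)
  split_ifs
  · exact (pow_ne_zero _ hζ).isUnit
  · exact isUnit_one

lemma forall_mem_eMat_units_iff {ζ : ℂ} (hζ : ζ ≠ 0)
    (P : Matrix (Fin (N + 1)) (Fin (N + 1)) ℂ → Prop) :
    (∀ u ∈ {u : (Matrix (Fin (N + 1)) (Fin (N + 1)) ℂ)ˣ | ∃ i ≤ N, (u : _) = eMat N b ζ i},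
      P u) ↔ ∀ i ≤ N, P (eMat N b ζ i) := by
  constructor
  · intro h i hi
    simpa using h _ ⟨i, hi, (isUnit_eMat hζ i).unit_spec⟩
  · rintro h u ⟨i, hi, hu⟩
    exact hu ▸ h i hi

lemma prod_ite_le_pow_eq_pow_sum {M : Type*} [CommMonoid M] (x : M) (e n : ℕ → ℕ) {i : ℕ}
    (hi : i ≤ N) :
    ∏ j : Fin (N + 1), (if (j : ℕ) ≤ i then x ^ e j else 1) ^ n j
      = x ^ ∑ j ∈ range (i + 1), e j * n j := by
  simp only [ite_pow, one_pow, ← pow_mul]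
  rw [Fin.prod_univ_eq_prod_range (fun j => if j ≤ i then x ^ (e j * n j) else 1),
    ← prod_filter, ← prod_pow_eq_pow_sum]
  congr 1
  ext j
  simp only [mem_filter, mem_range]
  omega

lemma matAct_eMat_monomial (ζ : ℂ) (n : ℕ → ℕ) {i : ℕ} (hi : i ≤ N) :
    matAct N (eMat N b ζ i)
        (monomial (Finsupp.equivFunOnFinite.symm fun j : Fin (N + 1) => n j) 1)
      = monomial (Finsupp.equivFunOnFinite.symm fun j : Fin (N + 1) => n j)
          (ζ ^ ∑ j ∈ range (i + 1), (range N).lcm b / Mf b j * b i * n j) := by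
  rw [eMat, matAct_diagonal_monomial]
  exact congrArg _ (prod_ite_le_pow_eq_pow_sum ζ (fun j => (range N).lcm b / Mf b j * b i) n hi)

lemma matAct_eMat_monomial_eq_self_iff (hb : ∀ i < N, 0 < b i) (hbN : b N = 1) {ζ : ℂ}
    (hζ : IsPrimitiveRoot ζ ((range N).lcm b)) (n : ℕ → ℕ) {i : ℕ} (hi : i ≤ N) :
    matAct N (eMat N b ζ i)
        (monomial (Finsupp.equivFunOnFinite.symm fun j : Fin (N + 1) => n j) 1)
      = monomial (Finsupp.equivFunOnFinite.symm fun j : Fin (N + 1) => n j) 1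
      ↔ ∃ k : ℤ, (b i : ℚ) * ∑ j ∈ range (i + 1), (n j : ℚ) / Mf b j = k := by
  have hM := lcm_range_ne_zero hb
  have hdvd : ∀ j ∈ range (i + 1), Mf b j ∣ (range N).lcm b := fun j hj =>
    lcm_range_succ_of_eq_one hbN ▸ Mf_dvd_lcm_range (by rw [mem_range] at hj; omega)
  rw [matAct_eMat_monomial ζ n hi, monomial_eq_monomial_iff, hζ.pow_eq_one_iff_dvd,
    dvd_iff_exists_int_eq_cast_div hM, cast_sum_div_mul_div _ _ _ _ hM hdvd]
  simp only [true_and, one_ne_zero, and_false, or_false]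

end Bonds

theorem stmt10_general (N : ℕ) (b : ℕ → ℕ) (hb : ∀ i < N, 0 < b i) (hbN : b N = 1)
    (ζ : ℂ) (hζ : IsPrimitiveRoot ζ ((Finset.range N).lcm b)) (n : ℕ → ℕ) :
    (∀ u ∈ Ggrp N b ζ,
        matAct N (u : Matrix (Fin (N + 1)) (Fin (N + 1)) ℂ)
            (MvPolynomial.monomial
              (Finsupp.equivFunOnFinite.symm fun j : Fin (N + 1) => n j) (1 : ℂ))
          = MvPolynomial.monomial
              (Finsupp.equivFunOnFinite.symm fun j : Fin (N + 1) => n j) (1 : ℂ))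
      ↔ ∀ i ≤ N, ∃ k : ℤ,
          (b i : ℚ) * (∑ j ∈ Finset.range (i + 1), (n j : ℚ) / (Mf b j : ℚ)) = k := by
  rw [Ggrp, forall_mem_closure_matAct_eq_iff,
    forall_mem_eMat_units_iff (hζ.ne_zero (lcm_range_ne_zero hb)) fun A => matAct N A _ = _]
  exact forall₂_congr fun i hi => matAct_eMat_monomial_eq_self_iff hb hbN hζ n hi

/-- A monomial `∏_j x_j^{n_j}` is fixed by every element of `G` if and only if
`b_i·(n_0/M_0 + ⋯ + n_i/M_i) ∈ ℤ` for all `0 ≤ i ≤ N` (with the convention `b_N = 1`). -/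
theorem stmt10 (N : ℕ) (hN : 1 ≤ N) (b : ℕ → ℕ) (hb : ∀ i < N, 0 < b i) (hbN : b N = 1)
    (ζ : ℂ) (hζ : IsPrimitiveRoot ζ ((Finset.range N).lcm b)) (n : ℕ → ℕ) :
    (∀ u ∈ Ggrp N b ζ,
        matAct N (u : Matrix (Fin (N + 1)) (Fin (N + 1)) ℂ)
            (MvPolynomial.monomial
              (Finsupp.equivFunOnFinite.symm fun j : Fin (N + 1) => n j) (1 : ℂ))
          = MvPolynomial.monomial
              (Finsupp.equivFunOnFinite.symm fun j : Fin (N + 1) => n j) (1 : ℂ))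
      ↔ ∀ i ≤ N, ∃ k : ℤ,
          (b i : ℚ) * (∑ j ∈ Finset.range (i + 1), (n j : ℚ) / (Mf b j : ℚ)) = k :=
  stmt10_general N b hb hbN ζ hζ n
end

section
/- Let t_0, t_1, …, t_N ∈ ℤ and set s_i = Σ_{j=i}^{N} b_j·t_j for 0 ≤ i ≤ N (with the convention b_N = 1). If 0 ≤ k ≤ N and M_i divides s_i for every i ≠ k, then M_k divides s_k. -/
open Finset MvPolynomial

/-!
Since `M_k = lcm(b_{k-1}, b_k)` it suffices that both bonds divide `s_k`, and
`s_i = b_i t_i + s_{i+1}` shows that `b_i ∣ s_i ↔ b_i ∣ s_{i+1}`. The neighbours of `k` give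
`b_{k-1} ∣ M_{k-1} ∣ s_{k-1}` and `b_k ∣ M_{k+1} ∣ s_{k+1}`; at `k = N` use `b_N = 1` instead.
-/

theorem natCast_Mf_dvd_iff {b : ℕ → ℕ} {i : ℕ} {x : ℤ} :
    (Mf b i : ℤ) ∣ x ↔ (0 < i → (b (i - 1) : ℤ) ∣ x) ∧ (b i : ℤ) ∣ x := by
  simp only [Int.natCast_dvd, Mf, Nat.lcm_dvd_iff]
  split_ifs with hi <;> simp [hi, Nat.pos_iff_ne_zero]

theorem natCast_dvd_sum_Icc_iff {R : Type*} [CommRing R] {b : ℕ → ℕ} {t : ℕ → R} {i N : ℕ}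
    (hi : i ≤ N) :
    (b i : R) ∣ ∑ j ∈ Icc i N, (b j : R) * t j ↔
      (b i : R) ∣ ∑ j ∈ Icc (i + 1) N, (b j : R) * t j := by
  rw [← add_sum_Ioc_eq_sum_Icc hi, ← Icc_add_one_left_eq_Ioc]
  exact dvd_add_right (dvd_mul_right _ _)

theorem stmt12_general (N : ℕ) (b : ℕ → ℕ) (hbN : b N = 1)
    (t : ℕ → ℤ) (k : ℕ) (hk : k ≤ N)
    (h : ∀ i ≤ N, i ≠ k → (Mf b i : ℤ) ∣ ∑ j ∈ Finset.Icc i N, (b j : ℤ) * t j) :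
    (Mf b k : ℤ) ∣ ∑ j ∈ Finset.Icc k N, (b j : ℤ) * t j := by
  rw [natCast_Mf_dvd_iff]
  refine ⟨fun hk0 => ?_, ?_⟩
  · obtain ⟨i, rfl⟩ := Nat.exists_eq_succ_of_ne_zero hk0.ne'
    have hi : (b i : ℤ) ∣ ∑ j ∈ Icc i N, (b j : ℤ) * t j :=
      (natCast_Mf_dvd_iff.1 (h i (by omega) (by omega))).2
    simpa using (natCast_dvd_sum_Icc_iff (by omega)).1 hi
  · rcases hk.lt_or_eq with hkN | rfl
    · refine (natCast_dvd_sum_Icc_iff hk).2 ?_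
      simpa using (natCast_Mf_dvd_iff.1 (h (k + 1) hkN (by omega))).1 k.succ_pos
    · simp [hbN]

/-- Let `t_0, …, t_N ∈ ℤ` and `s_i = ∑_{j=i}^{N} b_j·t_j` (with the convention
`b_N = 1`). If `0 ≤ k ≤ N` and `M_i ∣ s_i` for every `i ≠ k`, then `M_k ∣ s_k`. -/
theorem stmt12 (N : ℕ) (hN : 1 ≤ N) (b : ℕ → ℕ) (hb : ∀ i < N, 0 < b i) (hbN : b N = 1)
    (t : ℕ → ℤ) (k : ℕ) (hk : k ≤ N)
    (h : ∀ i ≤ N, i ≠ k → (Mf b i : ℤ) ∣ ∑ j ∈ Finset.Icc i N, (b j : ℤ) * t j) :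
    (Mf b k : ℤ) ∣ ∑ j ∈ Finset.Icc k N, (b j : ℤ) * t j :=
  stmt12_general N b hbN t k hk h
end

section
/- The group G contains no pseudo-reflection: every element of G is a diagonal matrix, and if g ∈ G is a diagonal matrix all of whose diagonal entries, except possibly one, are equal to 1, then g is the identity matrix. -/
open Finset MvPolynomial

section Aux

lemma lcm_cast_dvd (a b : ℕ) (c : ℤ) (h1 : (a:ℤ) ∣ c) (h2 : (b:ℤ) ∣ c) :
    ((Nat.lcm a b : ℕ) : ℤ) ∣ c := by
  have := Int.coe_lcm_dvd_iff.mpr ⟨h1, h2⟩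
  simpa [Int.lcm] using this

end Aux

/-- The group `G` contains no pseudo-reflection: every element of `G` is a diagonal
matrix, and if an element of `G` is a diagonal matrix all of whose diagonal entries,
except possibly one, are equal to `1`, then it is the identity. -/
theorem stmt13 (N : ℕ) (hN : 1 ≤ N) (b : ℕ → ℕ) (hb : ∀ i < N, 0 < b i) (hbN : b N = 1)
    (ζ : ℂ) (hζ : IsPrimitiveRoot ζ ((Finset.range N).lcm b)) :
    (∀ u ∈ Ggrp N b ζ, ∃ d : Fin (N + 1) → ℂ,
        (u : Matrix (Fin (N + 1)) (Fin (N + 1)) ℂ) = Matrix.diagonal d) ∧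
    (∀ u ∈ Ggrp N b ζ, ∀ d : Fin (N + 1) → ℂ,
        (u : Matrix (Fin (N + 1)) (Fin (N + 1)) ℂ) = Matrix.diagonal d →
        ∀ k : Fin (N + 1), (∀ j : Fin (N + 1), j ≠ k → d j = 1) → u = 1) := by
  set M : ℕ := (Finset.range N).lcm b with hM
  -- M is positive
  have hM0 : M ≠ 0 := by
    rw [hM]
    intro h
    rw [Finset.lcm_eq_zero_iff] at h
    obtain ⟨i, hi, h0⟩ : ∃ x < N, b x = 0 := by simpa using h
    exact (hb i hi).ne' h0
  have hζ0 : ζ ≠ 0 := hζ.ne_zero hM0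
  -- Mf b j divides M for all j ≤ N
  have hMfdvd : ∀ j ≤ N, Mf b j ∣ M := by
    intro j hj
    unfold Mf
    apply Nat.lcm_dvd
    · split
      · exact one_dvd _
      · exact Finset.dvd_lcm (Finset.mem_range.mpr (by omega))
    · rcases eq_or_lt_of_le hj with h | h
      · rw [h, hbN]; exact one_dvd _
      · exact Finset.dvd_lcm (Finset.mem_range.mpr h)
  set c : ℕ → ℕ := fun j => M / Mf b j with hc
  -- ζ ^ (c j * t) = 1 ↔ Mf b j ∣ t
  have hzone : ∀ j ≤ N, ∀ t : ℤ, (ζ ^ ((c j : ℤ) * t) = 1 ↔ (Mf b j : ℤ) ∣ t) := by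
    intro j hj t
    have hcm : c j * Mf b j = M := Nat.div_mul_cancel (hMfdvd j hj)
    have hc0 : (c j : ℤ) ≠ 0 := by
      intro h
      apply hM0
      rw [← hcm]
      simp [Nat.cast_eq_zero.mp h]
    rw [hζ.zpow_eq_one_iff_dvd]
    have : (M : ℤ) = (c j : ℤ) * (Mf b j : ℤ) := by exact_mod_cast hcm.symm
    rw [this]
    exact mul_dvd_mul_iff_left hc0
  -- the invariant
  have key : ∀ u ∈ Ggrp N b ζ, ∃ t : ℕ → ℤ,
      (∀ j < N, (b j : ℤ) ∣ t j - t (j + 1)) ∧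
      (u : Matrix (Fin (N + 1)) (Fin (N + 1)) ℂ) =
        Matrix.diagonal (fun j : Fin (N + 1) => ζ ^ ((c (j : ℕ) : ℤ) * t (j : ℕ))) := by
    intro u hu
    induction hu using Subgroup.closure_induction with
    | mem x hx =>
      obtain ⟨i, hi, hx⟩ := hx
      refine ⟨fun j => if j ≤ i then (b i : ℤ) else 0, ?_, ?_⟩
      · intro j hj
        rcases lt_trichotomy j i with h | h | h
        · simp [show j ≤ i by omega, show j + 1 ≤ i by omega]
        · subst h
          simp [show ¬(j + 1 ≤ j) by omega]
        · simp [show ¬(j ≤ i) by omega, show ¬(j + 1 ≤ i) by omega]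
      · rw [hx]
        unfold eMat
        refine congrArg Matrix.diagonal (funext fun j => ?_)
        by_cases h : (j : ℕ) ≤ i
        · simp only [h, if_true]
          rw [← zpow_natCast, Nat.cast_mul]
        · simp [h]
    | one =>
      refine ⟨fun _ => 0, by simp, ?_⟩
      simp [Matrix.diagonal_one]
    | mul x y hx hy ihx ihy =>
      obtain ⟨t, ht1, ht2⟩ := ihx
      obtain ⟨s, hs1, hs2⟩ := ihy
      refine ⟨t + s, ?_, ?_⟩
      · intro j hj
        have : (t + s) j - (t + s) (j + 1) = (t j - t (j + 1)) + (s j - s (j + 1)) := by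
          simp; ring
        rw [this]
        exact dvd_add (ht1 j hj) (hs1 j hj)
      · rw [Units.val_mul, ht2, hs2, Matrix.diagonal_mul_diagonal]
        refine congrArg Matrix.diagonal (funext fun j => ?_)
        simp only [Pi.add_apply]
        rw [mul_add, zpow_add₀ hζ0]
    | inv x hx ihx =>
      obtain ⟨t, ht1, ht2⟩ := ihx
      refine ⟨-t, ?_, ?_⟩
      · intro j hj
        have : (-t) j - (-t) (j + 1) = -(t j - t (j + 1)) := by simp; ring
        rw [this]
        exact dvd_neg.mpr (ht1 j hj)
      · have hinv : (x : Matrix (Fin (N + 1)) (Fin (N + 1)) ℂ) *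
            Matrix.diagonal (fun j : Fin (N + 1) => ζ ^ ((c (j : ℕ) : ℤ) * (-t) (j : ℕ))) = 1 := by
          rw [ht2, Matrix.diagonal_mul_diagonal]
          have : (fun j : Fin (N + 1) =>
              ζ ^ ((c (j : ℕ) : ℤ) * t (j : ℕ)) * ζ ^ ((c (j : ℕ) : ℤ) * (-t) (j : ℕ))) =
              fun _ => (1 : ℂ) := by
            funext j
            rw [← zpow_add₀ hζ0]
            simp
          rw [this, Matrix.diagonal_one]
        calc (↑x⁻¹ : Matrix (Fin (N + 1)) (Fin (N + 1)) ℂ)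
            = ↑x⁻¹ * ((x : Matrix (Fin (N + 1)) (Fin (N + 1)) ℂ) *
              Matrix.diagonal (fun j : Fin (N + 1) => ζ ^ ((c (j : ℕ) : ℤ) * (-t) (j : ℕ)))) := by
              rw [hinv, mul_one]
          _ = (↑x⁻¹ * (x : Matrix (Fin (N + 1)) (Fin (N + 1)) ℂ)) *
              Matrix.diagonal (fun j : Fin (N + 1) => ζ ^ ((c (j : ℕ) : ℤ) * (-t) (j : ℕ))) := by
              rw [mul_assoc]
          _ = Matrix.diagonal (fun j : Fin (N + 1) => ζ ^ ((c (j : ℕ) : ℤ) * (-t) (j : ℕ))) := by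
              rw [Units.inv_mul, one_mul]
  constructor
  · intro u hu
    obtain ⟨t, _, ht2⟩ := key u hu
    exact ⟨_, ht2⟩
  · intro u hu d hdiag k hdk
    obtain ⟨t, hdvd, heq⟩ := key u hu
    have hd : (fun j : Fin (N + 1) => ζ ^ ((c (j : ℕ) : ℤ) * t (j : ℕ))) = d :=
      Matrix.diagonal_injective (heq.symm.trans hdiag)
    -- Mf b j ∣ t j for all j ≤ N, j ≠ k
    have hall : ∀ j ≤ N, j ≠ (k : ℕ) → (Mf b j : ℤ) ∣ t j := by
      intro j hj hne
      have h1 : d ⟨j, by omega⟩ = 1 := hdk ⟨j, by omega⟩ (by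
        intro h
        exact hne (by simpa using congrArg Fin.val h))
      exact (hzone j hj _).mp ((congrFun hd ⟨j, by omega⟩).trans h1)
    -- key number-theoretic step: Mf b k ∣ t k
    have hκ : (k : ℕ) ≤ N := by omega
    have hA : (((if (k : ℕ) = 0 then 1 else b ((k : ℕ) - 1) : ℕ)) : ℤ) ∣ t (k : ℕ) := by
      rcases eq_or_ne (k : ℕ) 0 with h0 | h0
      · simp [h0]
      · rw [if_neg h0]
        have hk1 : (k : ℕ) - 1 < N := by omega
        have h1 : (Mf b ((k : ℕ) - 1) : ℤ) ∣ t ((k : ℕ) - 1) :=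
          hall _ (by omega) (by omega)
        have h2 : (b ((k : ℕ) - 1) : ℤ) ∣ t ((k : ℕ) - 1) := by
          refine dvd_trans ?_ h1
          exact_mod_cast Nat.dvd_lcm_right _ _
        have h3 : (b ((k : ℕ) - 1) : ℤ) ∣ t ((k : ℕ) - 1) - t ((k : ℕ) - 1 + 1) :=
          hdvd _ hk1
        have := dvd_sub h2 h3
        rw [show t ((k : ℕ) - 1) - (t ((k : ℕ) - 1) - t ((k : ℕ) - 1 + 1)) =
          t ((k : ℕ) - 1 + 1) by ring, show (k : ℕ) - 1 + 1 = (k : ℕ) by omega] at this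
        exact this
    have hB : (b (k : ℕ) : ℤ) ∣ t (k : ℕ) := by
      by_cases hkN : (k : ℕ) = N
      · rw [hkN, hbN]; exact one_dvd _
      · have hkN' : (k : ℕ) < N := by omega
        have h1 : (Mf b ((k : ℕ) + 1) : ℤ) ∣ t ((k : ℕ) + 1) :=
          hall _ (by omega) (by omega)
        have h2 : (b (k : ℕ) : ℤ) ∣ t ((k : ℕ) + 1) := by
          refine dvd_trans ?_ h1
          have : b (k : ℕ) ∣ Mf b ((k : ℕ) + 1) := by
            unfold Mf
            simpa using Nat.dvd_lcm_left _ _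
          exact_mod_cast this
        have h3 : (b (k : ℕ) : ℤ) ∣ t (k : ℕ) - t ((k : ℕ) + 1) := hdvd _ hkN'
        have := dvd_add h3 h2
        rwa [sub_add_cancel] at this
    have hMfk : (Mf b (k : ℕ) : ℤ) ∣ t (k : ℕ) := by
      unfold Mf
      exact lcm_cast_dvd _ _ _ hA hB
    have hdk1 : ζ ^ ((c (k : ℕ) : ℤ) * t (k : ℕ)) = 1 := (hzone _ hκ _).mpr hMfk
    have hall1 : ∀ j : Fin (N + 1), ζ ^ ((c (j : ℕ) : ℤ) * t (j : ℕ)) = 1 := by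
      intro j
      by_cases hj : j = k
      · rw [hj]; exact hdk1
      · exact (congrFun hd j).trans (hdk j hj)
    apply Units.ext
    rw [heq, Units.val_one, show (fun j : Fin (N + 1) => ζ ^ ((c (j : ℕ) : ℤ) * t (j : ℕ))) =
      fun _ => (1 : ℂ) from funext hall1, Matrix.diagonal_one]
end

section
/- Let R = ℂ[y_π : π an LS-path of degree 1] be the polynomial ring with one indeterminate for each degree-1 LS-path, and let φ : R → ℂ[x_0,…,x_N] be the ℂ-algebra homomorphism with φ(y_π) = x^π. Then φ maps R onto the discrete LS algebra A, and the kernel of φ is generated by the quadratic binomials y_π·y_{π′} − y_{π_0}·y_{π_0′}, where (π, π′) ranges over all pairs of degree-1 LS-paths that are non-standard (i.e., it is not the case that max supp π ≤ min supp π′), and (π_0, π_0′) is the canonical form of π + π′, i.e., the unique standard pair of degree-1 LS-paths with π_0 + π_0′ = π + π′ pointwise. -/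
open Finset MvPolynomial

/-!
An LS-path `σ` of degree `r` splits canonically as `σ = π₁ + ⋯ + π_r` into degree-one paths
forming a standard sequence: `π₁ = head σ` is the path whose partial sums are those of `σ`
capped at `1`, and `π₂ + ⋯ + π_r` is the splitting of `σ - head σ`. The standard monomial
`y_{π₁} ⋯ y_{π_r}` of `σ` is sent by `φ` to `x^σ`, and since every `M_i` is positive, `x^σ`
determines `σ`; so the images of the standard monomials are distinct monomials, hence linearly
independent.

Straightening: modulo the quadratic relations, `y_π` times the standard monomial of `τ` is the
standard monomial of `π + τ`. Indeed `y_π y_{head τ}` may be replaced by the canonical pair of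
`π + head τ`, whose head is `head (π + τ)`, and the remaining factor is handled by induction.
So `R` is spanned by standard monomials modulo the relation ideal `I ⊆ ker φ`, which gives both
the image of `φ` and `ker φ = I`.
-/

section LinearAlgebra

variable {K R M ι : Type*} [Ring K] [AddCommGroup R] [Module K R] [AddCommGroup M] [Module K M]
  {φ : R →ₗ[K] M} {p : Submodule K R} {v : ι → R}

theorem LinearMap.range_eq_span_of_sup_span_eq_top (hp : p ≤ LinearMap.ker φ)
    (htop : p ⊔ Submodule.span K (Set.range v) = ⊤) :
    LinearMap.range φ = Submodule.span K (Set.range (φ ∘ v)) := by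
  rw [LinearMap.range_eq_map, ← htop, Submodule.map_sup, Submodule.map_span,
    LinearMap.le_ker_iff_map.1 hp, bot_sup_eq, Set.range_comp]

theorem LinearMap.ker_eq_of_sup_span_eq_top (hp : p ≤ LinearMap.ker φ)
    (htop : p ⊔ Submodule.span K (Set.range v) = ⊤) (hv : LinearIndependent K (φ ∘ v)) :
    LinearMap.ker φ = p := by
  refine le_antisymm (fun x hx => ?_) hp
  obtain ⟨y, hy, z, hz, rfl⟩ := Submodule.mem_sup.1 (htop ▸ Submodule.mem_top : x ∈ p ⊔ _)
  obtain ⟨c, rfl⟩ := Finsupp.mem_span_range_iff_exists_finsupp.1 hz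
  have hc : Finsupp.linearCombination K (φ ∘ v) c = 0 := by
    rw [LinearMap.mem_ker, map_add, hp hy, zero_add] at hx
    simpa [Finsupp.linearCombination_apply, Finsupp.sum, map_sum] using hx
  simpa [linearIndependent_iff.1 hv c hc] using hy

end LinearAlgebra

namespace DiscreteLS

variable {N : ℕ} {b : ℕ → ℕ} {r s : ℕ} {π π' σ τ : ℕ → ℚ}

def psum (π : ℕ → ℚ) (j : ℕ) : ℚ := ∑ i ∈ range j, π i

@[simp] lemma psum_zero (π : ℕ → ℚ) : psum π 0 = 0 := sum_range_zero _

lemma psum_succ (π : ℕ → ℚ) (j : ℕ) : psum π (j + 1) = psum π j + π j := sum_range_succ _ _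

lemma psum_add (π π' : ℕ → ℚ) (j : ℕ) : psum (π + π') j = psum π j + psum π' j :=
  sum_add_distrib

lemma psum_sub (π π' : ℕ → ℚ) (j : ℕ) : psum (π - π') j = psum π j - psum π' j :=
  sum_sub_distrib ..

lemma psum_mono (hπ : ∀ i, 0 ≤ π i) : Monotone (psum π) := fun _ _ hjk =>
  sum_le_sum_of_subset_of_nonneg (range_subset_range.2 hjk) fun i _ _ => hπ i

lemma psum_nonneg (hπ : ∀ i, 0 ≤ π i) (j : ℕ) : 0 ≤ psum π j := by
  simpa using psum_mono hπ (Nat.zero_le j)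

lemma psum_eq_of_forall_ge {j k : ℕ} (hjk : j ≤ k) (h : ∀ i, j ≤ i → π i = 0) :
    psum π k = psum π j := by
  rw [psum, ← sum_range_add_sum_Ico _ hjk,
    sum_eq_zero fun i hi => h i (mem_Ico.1 hi).1, add_zero, psum]

lemma psum_eq_deg (hπ : IsLSPath N b r π) {j : ℕ} (hj : N + 1 ≤ j) : psum π j = r :=
  (psum_eq_of_forall_ge hj fun i hi => hπ.2.1 i hi).trans hπ.2.2.2

lemma psum_le_deg (hπ : IsLSPath N b r π) (j : ℕ) : psum π j ≤ r :=
  (psum_mono hπ.1 (le_max_left j (N + 1))).trans (psum_eq_deg hπ (le_max_right _ _)).le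

lemma isLSPath_zero : IsLSPath N b 0 0 :=
  ⟨fun _ => le_rfl, fun _ _ => rfl, fun _ _ => ⟨0, by simp⟩, by simp⟩

lemma isLSPath_add (hπ : IsLSPath N b r π) (hπ' : IsLSPath N b s π') :
    IsLSPath N b (r + s) (π + π') := by
  refine ⟨fun i => add_nonneg (hπ.1 i) (hπ'.1 i), fun i hi => ?_, fun j hj => ?_, ?_⟩
  · simp [hπ.2.1 i hi, hπ'.2.1 i hi]
  · obtain ⟨k, hk⟩ := hπ.2.2.1 j hj
    obtain ⟨k', hk'⟩ := hπ'.2.2.1 j hj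
    exact ⟨k + k', by simp only [Pi.add_apply, sum_add_distrib, mul_add, hk, hk', Int.cast_add]⟩
  · simp only [Pi.add_apply, sum_add_distrib, hπ.2.2.2, hπ'.2.2.2, Nat.cast_add]

lemma isLSPath_one_add (hπ : IsLSPath N b 1 π) (hτ : IsLSPath N b r τ) :
    IsLSPath N b (r + 1) (π + τ) :=
  Nat.add_comm 1 r ▸ isLSPath_add hπ hτ

lemma eq_zero_of_isLSPath_zero (hπ : IsLSPath N b 0 π) : π = 0 := by
  funext i
  have h₁ := psum_le_deg hπ (i + 1)
  have h₀ := psum_nonneg hπ.1 i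
  rw [psum_succ, Nat.cast_zero] at h₁
  exact le_antisymm (by simp only [Pi.zero_apply]; linarith) (hπ.1 i)

def head (σ : ℕ → ℚ) (i : ℕ) : ℚ := min (psum σ (i + 1)) 1 - min (psum σ i) 1

lemma psum_head (σ : ℕ → ℚ) (j : ℕ) : psum (head σ) j = min (psum σ j) 1 := by
  rw [psum]
  unfold head
  rw [sum_range_sub (fun i => min (psum σ i) 1)]
  simp

lemma head_eq_of_forall_min_psum_eq (h : ∀ j, min (psum σ j) 1 = psum π j) : head σ = π := by
  funext i
  unfold head
  rw [h, h, psum_succ]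
  ring

lemma isLSPath_head (hσ : IsLSPath N b (r + 1) σ) : IsLSPath N b 1 (head σ) := by
  refine ⟨fun i => ?_, fun i hi => ?_, fun j hj => ?_, ?_⟩
  · exact sub_nonneg.2 (min_le_min_right _ (psum_mono hσ.1 i.le_succ))
  · rw [head, psum_succ, hσ.2.1 i hi, add_zero, sub_self]
  · obtain ⟨k, hk⟩ := hσ.2.2.1 j hj
    rw [show ∑ i ∈ range (j + 1), head σ i = psum (head σ) (j + 1) from rfl, psum_head]
    rcases min_choice (psum σ (j + 1)) 1 with h | h <;> rw [h]
    · exact ⟨k, hk⟩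
    · exact ⟨b j, by simp⟩
  · rw [show ∑ i ∈ range (N + 1), head σ i = psum (head σ) (N + 1) from rfl, psum_head,
      psum_eq_deg hσ le_rfl]
    simp

lemma isLSPath_tail (hσ : IsLSPath N b (r + 1) σ) : IsLSPath N b r (σ - head σ) := by
  have hpsum (j : ℕ) : psum (σ - head σ) j = psum σ j - min (psum σ j) 1 := by
    rw [psum_sub, psum_head]
  refine ⟨fun i => ?_, fun i hi => ?_, fun j hj => ?_, ?_⟩
  · have := hσ.1 i
    rw [Pi.sub_apply, head, psum_succ]
    simp only [min_def]
    split_ifs <;> linarith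
  · rw [Pi.sub_apply, hσ.2.1 i hi, (isLSPath_head hσ).2.1 i hi, sub_zero]
  · obtain ⟨k, hk⟩ : ∃ k : ℤ, (b j : ℚ) * psum σ (j + 1) = k := hσ.2.2.1 j hj
    rw [show ∑ i ∈ range (j + 1), (σ - head σ) i = psum (σ - head σ) (j + 1) from rfl, hpsum]
    rcases min_choice (psum σ (j + 1)) 1 with h | h <;> rw [h]
    · exact ⟨0, by simp⟩
    · exact ⟨k - b j, by rw [mul_sub, hk]; push_cast; ring⟩
  · rw [show ∑ i ∈ range (N + 1), (σ - head σ) i = psum (σ - head σ) (N + 1) from rfl, hpsum,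
      psum_eq_deg hσ le_rfl, min_eq_right (by simp)]
    simp

lemma head_add_head (hπ : ∀ i, 0 ≤ π i) (hτ : ∀ i, 0 ≤ τ i) :
    head (π + head τ) = head (π + τ) := by
  refine head_eq_of_forall_min_psum_eq fun j => ?_
  have := psum_nonneg hπ j
  have := psum_nonneg hτ j
  rw [psum_add, psum_head, psum_head, psum_add]
  simp only [min_def]
  split_ifs <;> linarith

lemma head_add_of_suppLE (hπ : IsLSPath N b 1 π) (hπ' : ∀ i, 0 ≤ π' i) (hst : SuppLE π π') :
    head (π + π') = π := by
  refine head_eq_of_forall_min_psum_eq fun j => ?_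
  rw [psum_add]
  by_cases hz : ∀ i < j, π' i = 0
  · rw [show psum π' j = 0 from sum_eq_zero fun i hi => hz i (mem_range.1 hi), add_zero,
      min_eq_left (by exact_mod_cast psum_le_deg hπ j)]
  · push Not at hz
    obtain ⟨i₀, hi₀, hπ'i₀⟩ := hz
    have hone : psum π j = 1 := by
      have hvan (i : ℕ) (hi : j ≤ i) : π i = 0 := by_contra fun h => by
        have := hst i i₀ h hπ'i₀
        omega
      rw [← psum_eq_of_forall_ge (le_max_left j (N + 1)) hvan, psum_eq_deg hπ (le_max_right _ _),
        Nat.cast_one]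
    have hpos : 0 < psum π' j := calc
      0 < π' i₀ := lt_of_le_of_ne (hπ' i₀) (Ne.symm hπ'i₀)
      _ = psum π' (i₀ + 1) - psum π' i₀ := by rw [psum_succ]; ring
      _ ≤ psum π' j := by linarith [psum_mono hπ' hi₀, psum_nonneg hπ' i₀]
    rw [hone, min_eq_right (by linarith)]

lemma suppLE_head_sub_head (hσ : ∀ i, 0 ≤ σ i) : SuppLE (head σ) (σ - head σ) := by
  intro i j hi hj
  by_contra! hji
  have hlt : psum σ i < 1 := by
    by_contra! h
    exact hi (by rw [head, min_eq_right h, min_eq_right (h.trans (psum_mono hσ i.le_succ)),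
      sub_self])
  have hgt : 1 < psum σ (j + 1) := by
    by_contra! h
    exact hj (by rw [Pi.sub_apply, head, min_eq_left h,
      min_eq_left ((psum_mono hσ j.le_succ).trans h), psum_succ]; ring)
  linarith [psum_mono hσ (show j + 1 ≤ i by omega)]

lemma Mf_pos (hb : ∀ i < N, 0 < b i) (hbN : b N = 1) {i : ℕ} (hi : i ≤ N) : 0 < Mf b i := by
  refine Nat.lcm_pos ?_ ?_
  · split_ifs
    · exact one_pos
    · exact hb _ (by omega)
  · rcases hi.lt_or_eq with h | rfl
    · exact hb i h
    · exact hbN ▸ one_pos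

lemma exists_int_mul_psum_of_dvd (hbN : b N = 1) (hπ : IsLSPath N b r π) {j m : ℕ}
    (hj : j ≤ N) (hm : b j ∣ m) : ∃ k : ℤ, (m : ℚ) * psum π (j + 1) = k := by
  obtain ⟨c, rfl⟩ := hm
  obtain ⟨k, hk⟩ : ∃ k : ℤ, (b j : ℚ) * psum π (j + 1) = k := by
    rcases hj.lt_or_eq with h | rfl
    · exact hπ.2.2.1 j h
    · exact ⟨r, by rw [hbN, psum_eq_deg hπ le_rfl]; simp⟩
  exact ⟨c * k, by push_cast; rw [mul_comm (b j : ℚ), mul_assoc, hk]⟩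

/-- `M_i` is a multiple of both bonds `b_{i-1}` and `b_i`, which make the partial sums up to
`i - 1` and up to `i` integral. -/
lemma exists_nat_Mf_mul_eq (hbN : b N = 1) (hπ : IsLSPath N b r π) (i : ℕ) :
    ∃ m : ℕ, (Mf b i : ℚ) * π i = m := by
  rcases le_or_gt i N with hi | hi
  · obtain ⟨k₁, hk₁⟩ := exists_int_mul_psum_of_dvd (m := Mf b i) hbN hπ hi (Nat.dvd_lcm_right _ _)
    obtain ⟨k₀, hk₀⟩ : ∃ k : ℤ, (Mf b i : ℚ) * psum π i = k := by
      rcases i with _ | i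
      · exact ⟨0, by simp⟩
      · exact exists_int_mul_psum_of_dvd hbN hπ (by omega) (Nat.dvd_lcm_left _ _)
    have hval : (Mf b i : ℚ) * π i = (k₁ - k₀ : ℤ) := by
      rw [Int.cast_sub, ← hk₁, ← hk₀, psum_succ]
      ring
    have hnonneg : 0 ≤ k₁ - k₀ := by
      exact_mod_cast hval ▸ mul_nonneg (Nat.cast_nonneg _) (hπ.1 i)
    exact ⟨(k₁ - k₀).toNat, by rw [hval]; exact_mod_cast (Int.toNat_of_nonneg hnonneg).symm⟩
  · exact ⟨0, by rw [hπ.2.1 i hi]; simp⟩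

noncomputable def xexp (N : ℕ) (b : ℕ → ℕ) (π : ℕ → ℚ) : Fin (N + 1) →₀ ℕ :=
  Finsupp.equivFunOnFinite.symm fun i : Fin (N + 1) => ⌊(Mf b i : ℚ) * π i⌋₊

lemma xexp_apply (i : Fin (N + 1)) : xexp N b π i = ⌊(Mf b i : ℚ) * π i⌋₊ := rfl

lemma xpow_eq_monomial_xexp : xpow N b π = monomial (xexp N b π) 1 := rfl

lemma xexp_add (hbN : b N = 1) (hπ : IsLSPath N b r π) (hπ' : IsLSPath N b s π') :
    xexp N b (π + π') = xexp N b π + xexp N b π' := by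
  ext i
  obtain ⟨m, hm⟩ := exists_nat_Mf_mul_eq hbN hπ i
  obtain ⟨m', hm'⟩ := exists_nat_Mf_mul_eq hbN hπ' i
  rw [Finsupp.add_apply, xexp_apply, xexp_apply, xexp_apply, Pi.add_apply, mul_add, hm, hm',
    ← Nat.cast_add, Nat.floor_natCast, Nat.floor_natCast, Nat.floor_natCast]

lemma xpow_add (hbN : b N = 1) (hπ : IsLSPath N b r π) (hπ' : IsLSPath N b s π') :
    xpow N b (π + π') = xpow N b π * xpow N b π' := by
  simp only [xpow_eq_monomial_xexp, monomial_mul, xexp_add hbN hπ hπ', mul_one]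

lemma xpow_zero : xpow N b 0 = 1 := by
  rw [xpow_eq_monomial_xexp, show xexp N b 0 = 0 by ext; simp [xexp_apply], monomial_zero', C_1]

lemma eq_of_xexp_eq (hb : ∀ i < N, 0 < b i) (hbN : b N = 1) (hπ : IsLSPath N b r π)
    (hπ' : IsLSPath N b s π') (h : xexp N b π = xexp N b π') : π = π' := by
  funext i
  rcases le_or_gt i N with hi | hi
  · have hMf : (Mf b i : ℚ) ≠ 0 := by exact_mod_cast (Mf_pos hb hbN hi).ne'
    obtain ⟨m, hm⟩ := exists_nat_Mf_mul_eq hbN hπ i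
    obtain ⟨m', hm'⟩ := exists_nat_Mf_mul_eq hbN hπ' i
    have hi' := DFunLike.congr_fun h ⟨i, Nat.lt_succ_of_le hi⟩
    rw [xexp_apply, xexp_apply, hm, hm', Nat.floor_natCast, Nat.floor_natCast] at hi'
    exact mul_left_cancel₀ hMf (by rw [hm, hm', hi'])
  · rw [hπ.2.1 i hi, hπ'.2.1 i hi]

variable (N b) in
abbrev DegreeOnePath := {π : ℕ → ℚ // IsLSPath N b 1 π}

variable (N b) in
noncomputable abbrev phi :
    MvPolynomial (DegreeOnePath N b) ℂ →ₐ[ℂ] MvPolynomial (Fin (N + 1)) ℂ :=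
  aeval fun π : DegreeOnePath N b => xpow N b π.1

variable (N b) in
def straighteningRelations : Set (MvPolynomial (DegreeOnePath N b) ℂ) :=
  {f | ∃ π π' π₀ π₀' : DegreeOnePath N b,
    ¬ SuppLE π.1 π'.1 ∧ SuppLE π₀.1 π₀'.1 ∧
    (∀ i, π₀.1 i + π₀'.1 i = π.1 i + π'.1 i) ∧
    f = X π * X π' - X π₀ * X π₀'}

variable (N b) in
structure LSPath where
  deg : ℕ
  path : ℕ → ℚ
  isLSPath : IsLSPath N b deg path

lemma LSPath.path_injective : Function.Injective (LSPath.path (N := N) (b := b)) := by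
  rintro ⟨r, σ, hσ⟩ ⟨r', σ', hσ'⟩ (rfl : σ = σ')
  obtain rfl : r = r' := by exact_mod_cast hσ.2.2.2.symm.trans hσ'.2.2.2
  rfl

lemma discreteLS_eq_span_range :
    discreteLS N b = Submodule.span ℂ (Set.range fun σ : LSPath N b => xpow N b σ.path) := by
  rw [discreteLS]
  congr 1
  ext p
  exact ⟨fun ⟨r, σ, hσ, hp⟩ => ⟨⟨r, σ, hσ⟩, hp.symm⟩, fun ⟨σ, hp⟩ => ⟨_, _, σ.isLSPath, hp.symm⟩⟩

noncomputable def stdMonomial :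
    (r : ℕ) → (σ : ℕ → ℚ) → IsLSPath N b r σ → MvPolynomial (DegreeOnePath N b) ℂ
  | 0, _, _ => 1
  | r + 1, σ, hσ => X ⟨head σ, isLSPath_head hσ⟩ * stdMonomial r (σ - head σ) (isLSPath_tail hσ)

lemma stdMonomial_succ (hσ : IsLSPath N b (r + 1) σ) :
    stdMonomial (r + 1) σ hσ =
      X ⟨head σ, isLSPath_head hσ⟩ * stdMonomial r (σ - head σ) (isLSPath_tail hσ) :=
  rfl

lemma stdMonomial_congr {σ' : ℕ → ℚ} (hσ : IsLSPath N b r σ)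
    (hσ' : IsLSPath N b r σ') (h : σ = σ') : stdMonomial r σ hσ = stdMonomial r σ' hσ' := by
  subst h; rfl

lemma phi_stdMonomial (hbN : b N = 1) :
    ∀ (r : ℕ) (σ : ℕ → ℚ) (hσ : IsLSPath N b r σ), phi N b (stdMonomial r σ hσ) = xpow N b σ
  | 0, σ, hσ => by
    rw [stdMonomial, map_one, eq_zero_of_isLSPath_zero hσ, xpow_zero]
  | r + 1, σ, hσ => by
    rw [stdMonomial_succ, map_mul, aeval_X, phi_stdMonomial hbN r, ← xpow_add hbN (isLSPath_head hσ)
      (isLSPath_tail hσ), add_sub_cancel]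

variable (N b) in
noncomputable def LSPath.stdMonomial (σ : LSPath N b) : MvPolynomial (DegreeOnePath N b) ℂ :=
  DiscreteLS.stdMonomial σ.deg σ.path σ.isLSPath

lemma span_straighteningRelations_le_ker (hbN : b N = 1) :
    Ideal.span (straighteningRelations N b) ≤ RingHom.ker (phi N b) := by
  rw [Ideal.span_le]
  rintro f ⟨π, π', π₀, π₀', -, -, hsum, rfl⟩
  have hsum : π₀.1 + π₀'.1 = π.1 + π'.1 := funext hsum
  simp only [SetLike.mem_coe, RingHom.mem_ker, map_sub, map_mul, aeval_X,
    ← xpow_add hbN π.2 π'.2, ← xpow_add hbN π₀.2 π₀'.2, hsum, sub_self]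

lemma stdMonomial_one (hπ : IsLSPath N b 1 π) : stdMonomial 1 π hπ = X ⟨π, hπ⟩ := by
  have hhead : head π = π := by
    simpa using head_add_of_suppLE (π' := 0) hπ (fun _ => le_rfl) (fun _ _ _ h => absurd rfl h)
  rw [stdMonomial_succ, stdMonomial, mul_one]
  congr 1
  exact Subtype.ext hhead

lemma X_mul_X_sub_X_head_mul_X_tail_mem (π π' : DegreeOnePath N b) :
    (X π * X π' - X ⟨head (π.1 + π'.1), isLSPath_head (isLSPath_add π.2 π'.2)⟩ *
      X ⟨π.1 + π'.1 - head (π.1 + π'.1), isLSPath_tail (isLSPath_add π.2 π'.2)⟩ :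
      MvPolynomial (DegreeOnePath N b) ℂ) ∈ Ideal.span (straighteningRelations N b) := by
  by_cases hst : SuppLE π.1 π'.1
  · have hhead : head (π.1 + π'.1) = π.1 := head_add_of_suppLE π.2 π'.2.1 hst
    have h₀ : (⟨head (π.1 + π'.1), isLSPath_head (isLSPath_add π.2 π'.2)⟩ : DegreeOnePath N b)
        = π := Subtype.ext hhead
    have h₁ : (⟨π.1 + π'.1 - head (π.1 + π'.1), isLSPath_tail (isLSPath_add π.2 π'.2)⟩ :
        DegreeOnePath N b) = π' := Subtype.ext (by simp only [hhead, add_sub_cancel_left])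
    rw [h₀, h₁, sub_self]
    exact zero_mem _
  · refine Ideal.subset_span ⟨π, π', _, _, hst, suppLE_head_sub_head (isLSPath_add π.2 π'.2).1,
      fun i => ?_, rfl⟩
    simp

lemma X_mul_stdMonomial_sub_mem (π : DegreeOnePath N b) (hτ : IsLSPath N b r τ) :
    X π * stdMonomial r τ hτ - stdMonomial (r + 1) (π.1 + τ) (isLSPath_one_add π.2 hτ) ∈
      Ideal.span (straighteningRelations N b) := by
  induction r generalizing π τ with
  | zero =>
    obtain rfl := eq_zero_of_isLSPath_zero hτ
    rw [stdMonomial, stdMonomial_congr _ π.2 (add_zero π.1), stdMonomial_one, mul_one, sub_self]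
    exact zero_mem _
  | succ r ih =>
    set c : DegreeOnePath N b := ⟨head τ, isLSPath_head hτ⟩
    set c₀ : DegreeOnePath N b := ⟨head (π.1 + c.1), isLSPath_head (isLSPath_add π.2 c.2)⟩
    set c₁ : DegreeOnePath N b :=
      ⟨π.1 + c.1 - head (π.1 + c.1), isLSPath_tail (isLSPath_add π.2 c.2)⟩
    have habsorb : head (π.1 + c.1) = head (π.1 + τ) := head_add_head π.2.1 hτ.1
    have hc₀ : c₀ = ⟨head (π.1 + τ), isLSPath_head (isLSPath_one_add π.2 hτ)⟩ :=
      Subtype.ext habsorb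
    have htail : c₁.1 + (τ - head τ) = π.1 + τ - head (π.1 + τ) := by
      simp only [c₁, c, habsorb]
      abel
    have hIH := ih c₁ (isLSPath_tail hτ)
    rw [stdMonomial_congr _ (isLSPath_tail (isLSPath_one_add π.2 hτ)) htail] at hIH
    rw [stdMonomial_succ hτ, stdMonomial_succ, ← hc₀]
    set S := stdMonomial r (τ - head τ) (isLSPath_tail hτ)
    set S' := stdMonomial (r + 1) (π.1 + τ - head (π.1 + τ)) _
    rw [show X π * (X c * S) - X c₀ * S' = (X π * X c - X c₀ * X c₁) * S + X c₀ * (X c₁ * S - S')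
      by ring]
    exact add_mem (Ideal.mul_mem_right _ _ (X_mul_X_sub_X_head_mul_X_tail_mem π c)) (Ideal.mul_mem_left _ _ hIH)

lemma sup_span_stdMonomial_eq_top :
    (Ideal.span (straighteningRelations N b)).restrictScalars ℂ ⊔
      Submodule.span ℂ (Set.range (LSPath.stdMonomial N b)) = ⊤ := by
  set Q := (Ideal.span (straighteningRelations N b)).restrictScalars ℂ ⊔
    Submodule.span ℂ (Set.range (LSPath.stdMonomial N b))
  have hone : (1 : MvPolynomial (DegreeOnePath N b) ℂ) ∈ Q :=
    Submodule.mem_sup_right (Submodule.subset_span ⟨⟨0, 0, isLSPath_zero⟩, rfl⟩)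
  have hX (π : DegreeOnePath N b) : Q ≤ Q.comap (LinearMap.mulLeft ℂ (X π)) := by
    refine sup_le (fun f hf => Submodule.mem_sup_left (Ideal.mul_mem_left _ _ hf)) ?_
    rw [Submodule.span_le]
    rintro _ ⟨⟨r, τ, hτ⟩, rfl⟩
    have hmem := X_mul_stdMonomial_sub_mem π hτ
    rw [SetLike.mem_coe, Submodule.mem_comap, LinearMap.mulLeft_apply,
      ← sub_add_cancel (X π * _) (stdMonomial (r + 1) (π.1 + τ) (isLSPath_one_add π.2 hτ))]
    exact add_mem (Submodule.mem_sup_left hmem)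
      (Submodule.mem_sup_right (Submodule.subset_span ⟨⟨_, _, isLSPath_one_add π.2 hτ⟩, rfl⟩))
  rw [eq_top_iff]
  rintro f -
  induction f using MvPolynomial.induction_on with
  | C a => simpa [Algebra.smul_def] using Q.smul_mem a hone
  | add p q hp hq => exact add_mem hp hq
  | mul_X p π hp => exact mul_comm p (X π) ▸ hX π hp

lemma phi_comp_stdMonomial (hbN : b N = 1) :
    (phi N b).toLinearMap ∘ LSPath.stdMonomial N b = fun σ => xpow N b σ.path :=
  funext fun σ => phi_stdMonomial hbN σ.deg σ.path σ.isLSPath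

lemma linearIndependent_phi_stdMonomial (hb : ∀ i < N, 0 < b i) (hbN : b N = 1) :
    LinearIndependent ℂ ((phi N b).toLinearMap ∘ LSPath.stdMonomial N b) := by
  rw [phi_comp_stdMonomial hbN]
  refine (basisMonomials _ ℂ).linearIndependent.comp _ fun σ σ' hσσ' => ?_
  exact LSPath.path_injective (eq_of_xexp_eq hb hbN σ.isLSPath σ'.isLSPath hσσ')

end DiscreteLS

open DiscreteLS in
theorem stmt17_general (N : ℕ) (b : ℕ → ℕ) (hb : ∀ i < N, 0 < b i) (hbN : b N = 1) :
    Set.range (⇑(MvPolynomial.aeval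
        (fun π : {π : ℕ → ℚ // IsLSPath N b 1 π} => xpow N b π.1) :
          MvPolynomial {π : ℕ → ℚ // IsLSPath N b 1 π} ℂ →ₐ[ℂ]
            MvPolynomial (Fin (N + 1)) ℂ))
      = (discreteLS N b : Set (MvPolynomial (Fin (N + 1)) ℂ)) ∧
    RingHom.ker (MvPolynomial.aeval
        (fun π : {π : ℕ → ℚ // IsLSPath N b 1 π} => xpow N b π.1) :
          MvPolynomial {π : ℕ → ℚ // IsLSPath N b 1 π} ℂ →ₐ[ℂ]
            MvPolynomial (Fin (N + 1)) ℂ).toRingHom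
      = Ideal.span {f | ∃ π π' π₀ π₀' : {π : ℕ → ℚ // IsLSPath N b 1 π},
          ¬ SuppLE π.1 π'.1 ∧ SuppLE π₀.1 π₀'.1 ∧
          (∀ i, π₀.1 i + π₀'.1 i = π.1 i + π'.1 i) ∧
          f = MvPolynomial.X π * MvPolynomial.X π'
            - MvPolynomial.X π₀ * MvPolynomial.X π₀'} := by
  have hle : (Ideal.span (straighteningRelations N b)).restrictScalars ℂ ≤
      LinearMap.ker (phi N b).toLinearMap := fun f hf => span_straighteningRelations_le_ker hbN hf
  constructor
  · have hrange := LinearMap.range_eq_span_of_sup_span_eq_top hle sup_span_stdMonomial_eq_top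
    change Set.range (phi N b).toLinearMap = _
    rw [← LinearMap.coe_range, hrange, phi_comp_stdMonomial hbN, discreteLS_eq_span_range]
  · have hker := LinearMap.ker_eq_of_sup_span_eq_top hle sup_span_stdMonomial_eq_top
      (linearIndependent_phi_stdMonomial hb hbN)
    exact SetLike.ext fun f => SetLike.ext_iff.1 hker f

/-- Let `R = ℂ[y_π : π an LS-path of degree 1]` and let `φ : R → ℂ[x_0,…,x_N]` be the
`ℂ`-algebra homomorphism with `φ(y_π) = x^π`. Then `φ` maps `R` onto the discrete LS
algebra `A`, and `ker φ` is generated by the quadratic binomials `y_π·y_π' − y_{π₀}·y_{π₀'}`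
where `(π, π')` ranges over the non-standard pairs of degree-1 LS-paths and `(π₀, π₀')`
is the canonical form of `π + π'`, i.e. the standard pair with `π₀ + π₀' = π + π'`. -/
theorem stmt17 (N : ℕ) (hN : 1 ≤ N) (b : ℕ → ℕ) (hb : ∀ i < N, 0 < b i) (hbN : b N = 1) :
    Set.range (⇑(MvPolynomial.aeval
        (fun π : {π : ℕ → ℚ // IsLSPath N b 1 π} => xpow N b π.1) :
          MvPolynomial {π : ℕ → ℚ // IsLSPath N b 1 π} ℂ →ₐ[ℂ]
            MvPolynomial (Fin (N + 1)) ℂ))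
      = (discreteLS N b : Set (MvPolynomial (Fin (N + 1)) ℂ)) ∧
    RingHom.ker (MvPolynomial.aeval
        (fun π : {π : ℕ → ℚ // IsLSPath N b 1 π} => xpow N b π.1) :
          MvPolynomial {π : ℕ → ℚ // IsLSPath N b 1 π} ℂ →ₐ[ℂ]
            MvPolynomial (Fin (N + 1)) ℂ).toRingHom
      = Ideal.span {f | ∃ π π' π₀ π₀' : {π : ℕ → ℚ // IsLSPath N b 1 π},
          ¬ SuppLE π.1 π'.1 ∧ SuppLE π₀.1 π₀'.1 ∧
          (∀ i, π₀.1 i + π₀'.1 i = π.1 i + π'.1 i) ∧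
          f = MvPolynomial.X π * MvPolynomial.X π'
            - MvPolynomial.X π₀ * MvPolynomial.X π₀'} :=
  stmt17_general N b hb hbN
end
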